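/- arXiv:1301.0074 — 11 statements merged into one kernel-verified Lean document; each statement's English description precedes it below -/
import Mathlib

section
/- Let P = {1, 2, ..., 2^n} ⊆ ℝ and define E to be the set of triples (x₁, x₂, x₃) with x₁ < x₂ < x₃ and x₁ + x₃ - 2x₂ ≥ 0. Then any subset H ⊆ P all of whose increasing triples lie in E has at most n + 1 elements. -/
/-- Any subset `H` of `{1, ..., 2^n}` all of whose increasing triples `(x, y, z)`
satisfy `x + z - 2y ≥ 0` has at most `n + 1` elements. -/
theorem stmt_0 (n : ℕ) (H : Finset ℕ)
    (hH : H ⊆ Finset.Icc 1 (2 ^ n))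
    (hE : ∀ x ∈ H, ∀ y ∈ H, ∀ z ∈ H, x < y → y < z → (0 : ℤ) ≤ (x : ℤ) + z - 2 * y) :
    H.card ≤ n + 1 := by
  by_contra h
  push_neg at h
  set r := H.card with hr
  have hr2 : n + 2 ≤ r := h
  have h0r : 0 < r := by omega
  let f : Fin r → ℕ := fun i => H.orderIsoOfFin rfl i
  have hmem : ∀ i, f i ∈ H := fun i => (H.orderIsoOfFin rfl i).2
  have hmono : StrictMono f := fun i j hij =>
    (H.orderIsoOfFin rfl).strictMono hij
  have key : ∀ i : ℕ, ∀ hi : i + 1 < r,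
      (2 : ℤ) ^ i ≤ (f ⟨i + 1, hi⟩ : ℤ) - f ⟨0, h0r⟩ := by
    intro i
    induction i with
    | zero =>
      intro hi
      have := hmono (show (⟨0, h0r⟩ : Fin r) < ⟨0 + 1, hi⟩ by
        simp [Fin.lt_def])
      simp only [pow_zero]
      omega
    | succ i ih =>
      intro hi
      have hi1 : i + 1 < r := Nat.lt_of_succ_lt hi
      have hp0 : (⟨0, h0r⟩ : Fin r) < ⟨i + 1, hi1⟩ := by
        simp [Fin.lt_def]
      have hp1 : (⟨i + 1, hi1⟩ : Fin r) < ⟨i + 1 + 1, hi⟩ := by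
        simp [Fin.lt_def]
      have hE' := hE _ (hmem ⟨0, h0r⟩) _ (hmem ⟨i + 1, hi1⟩)
        _ (hmem ⟨i + 1 + 1, hi⟩) (hmono hp0) (hmono hp1)
      have hih := ih hi1
      have hp : (2:ℤ)^(i+1) = 2 * 2^i := by ring
      omega
  have hrlt : r - 2 + 1 < r := by omega
  have hkey := key (r - 2) hrlt
  have hbound1 := hH (hmem ⟨r - 2 + 1, hrlt⟩)
  have hbound0 := hH (hmem ⟨0, h0r⟩)
  simp only [Finset.mem_Icc] at hbound1 hbound0
  have hpow : (2 : ℤ) ^ n ≤ 2 ^ (r - 2) := by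
    apply pow_le_pow_right₀ (by norm_num)
    omega
  have h2n : ((2:ℕ) ^ n : ℤ) = (2:ℤ) ^ n := by push_cast; ring
  omega
end

section
/- Let P = {1, 2, ..., 2^n} ⊆ ℝ. Then any subset H = {p₁ < ... < p_r} ⊆ P such that for all i < j < k we have p_i + p_k - 2p_j < 0 has at most n + 1 elements. -/
lemma aux_doubling (n : ℕ) : ∀ (S : Finset ℕ),
    (∀ a ∈ S, 1 ≤ a ∧ a < 2 ^ n) →
    (∀ a ∈ S, ∀ b ∈ S, a < b → 2 * a < b) → S.card ≤ n := by
  induction n with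
  | zero =>
    intro S h1 _
    have : S = ∅ := by
      apply Finset.eq_empty_of_forall_notMem
      intro a ha
      have := h1 a ha
      omega
    simp [this]
  | succ n ih =>
    intro S h1 h2
    rcases S.eq_empty_or_nonempty with rfl | hne
    · simp
    · set M := S.max' hne with hMdef
      have hM : M ∈ S := S.max'_mem hne
      have key : (S.erase M).card ≤ n := by
        apply ih
        · intro a ha
          have haS := Finset.mem_of_mem_erase ha
          have hane : a ≠ M := Finset.ne_of_mem_erase ha
          have haM : a < M := lt_of_le_of_ne (S.le_max' a haS) hane
          have h2a : 2 * a < M := h2 a haS M hM haM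
          have hMlt : M < 2 ^ (n + 1) := (h1 M hM).2
          have := (h1 a haS).1
          constructor
          · exact this
          · have : 2 * a < 2 ^ (n + 1) := by omega
            simpa [pow_succ, two_mul] using by omega
        · intro a ha b hb hab
          exact h2 a (Finset.mem_of_mem_erase ha) b (Finset.mem_of_mem_erase hb) hab
      have : S.card = (S.erase M).card + 1 := by
        rw [Finset.card_erase_of_mem hM]
        have : 1 ≤ S.card := Finset.card_pos.mpr hne
        omega
      omega

/-- Any subset `H` of `{1, ..., 2^n}` all of whose increasing triples `(x, y, z)`
satisfy `x + z - 2y < 0` has at most `n + 1` elements. -/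
theorem stmt_1 (n : ℕ) (H : Finset ℕ)
    (hH : H ⊆ Finset.Icc 1 (2 ^ n))
    (hE : ∀ x ∈ H, ∀ y ∈ H, ∀ z ∈ H, x < y → y < z → (x : ℤ) + z - 2 * y < 0) :
    H.card ≤ n + 1 := by
  rcases H.eq_empty_or_nonempty with rfl | hne
  · simp
  set M := H.max' hne with hMdef
  have hM : H.max' hne ∈ H := H.max'_mem hne
  have hMle : M ≤ 2 ^ n := (Finset.mem_Icc.mp (hH hM)).2
  set S := (H.erase M).image (fun x => M - x) with hS
  have hinj : Set.InjOn (fun x => M - x) (H.erase M) := by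
    intro a ha b hb hab
    have haM : a < M := lt_of_le_of_ne (H.le_max' a (Finset.mem_of_mem_erase ha))
      (Finset.ne_of_mem_erase ha)
    have hbM : b < M := lt_of_le_of_ne (H.le_max' b (Finset.mem_of_mem_erase hb))
      (Finset.ne_of_mem_erase hb)
    simp only at hab
    omega
  have hcard : S.card = (H.erase M).card := Finset.card_image_of_injOn hinj
  have hSn : S.card ≤ n := by
    apply aux_doubling n S
    · intro a ha
      obtain ⟨x, hx, rfl⟩ := Finset.mem_image.mp ha
      have hxH := Finset.mem_of_mem_erase hx
      have hxM : x < M := lt_of_le_of_ne (H.le_max' x hxH) (Finset.ne_of_mem_erase hx)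
      have hx1 : 1 ≤ x := (Finset.mem_Icc.mp (hH hxH)).1
      constructor <;> omega
    · intro a ha b hb hab
      obtain ⟨x, hx, rfl⟩ := Finset.mem_image.mp ha
      obtain ⟨y, hy, rfl⟩ := Finset.mem_image.mp hb
      have hxH := Finset.mem_of_mem_erase hx
      have hyH := Finset.mem_of_mem_erase hy
      have hxM : x < M := lt_of_le_of_ne (H.le_max' x hxH) (Finset.ne_of_mem_erase hx)
      have hyM : y < M := lt_of_le_of_ne (H.le_max' y hyH) (Finset.ne_of_mem_erase hy)
      have hyx : y < x := by omega
      have := hE y hyH x hxH M hM hyx hxM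
      omega
  have : H.card = (H.erase M).card + 1 := by
    rw [Finset.card_erase_of_mem hM]
    have : 1 ≤ H.card := Finset.card_pos.mpr hne
    omega
  omega
end

section
/- For a ∈ {1, ..., 2^N}, write a - 1 = Σ_{i=0}^{N-1} a(i)·2^i with a(i) ∈ {0,1}, and for a ≠ b define δ(a,b) = i + 1 where i is the largest index with a(i) ≠ b(i). Then for any a < b < c in {1, ..., 2^N}, δ(a,b) ≠ δ(b,c). -/
/-- Property A of the stepping-up lemma: for `1 ≤ a < b < c ≤ 2^N`, if `i` is the largest
index at which the binary expansions of `a - 1` and `b - 1` differ, and `j` is the largest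
index at which those of `b - 1` and `c - 1` differ, then `δ(a,b) = i + 1 ≠ j + 1 = δ(b,c)`. -/
theorem stmt_3 (N a b c i j : ℕ) (ha : 1 ≤ a) (hab : a < b) (hbc : b < c) (hc : c ≤ 2 ^ N)
    (hi₁ : (a - 1).testBit i ≠ (b - 1).testBit i)
    (hi₂ : ∀ l, i < l → (a - 1).testBit l = (b - 1).testBit l)
    (hj₁ : (b - 1).testBit j ≠ (c - 1).testBit j)
    (hj₂ : ∀ l, j < l → (b - 1).testBit l = (c - 1).testBit l) :
    i + 1 ≠ j + 1 := by
  intro h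
  have hij : i = j := by omega
  subst hij
  cases hb : (b - 1).testBit i with
  | false =>
    have ha' : (a - 1).testBit i = true := by
      cases h' : (a - 1).testBit i
      · exact absurd (h'.trans hb.symm) hi₁
      · rfl
    have : b - 1 < a - 1 :=
      Nat.lt_of_testBit i hb ha' (fun l hl => (hi₂ l hl).symm)
    omega
  | true =>
    have hc' : (c - 1).testBit i = false := by
      cases h' : (c - 1).testBit i
      · rfl
      · exact absurd (hb.trans h'.symm) hj₁
    have : c - 1 < b - 1 :=
      Nat.lt_of_testBit i hc' hb (fun l hl => (hj₂ l hl).symm)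
    omega
end

section
/- For a ∈ {1, ..., 2^N}, write a - 1 in binary and for a ≠ b let δ(a,b) = i + 1 where i is the largest index with differing bits. Then for any a₁ < a₂ < ... < a_n in {1, ..., 2^N}, δ(a₁, a_n) = max over 1 ≤ i ≤ n-1 of δ(a_i, a_{i+1}). -/
/-!
Writing `d x y = Nat.log2 (x ^^^ y)`, one has `d x y < k + 1` exactly when `x / 2 ^ (k + 1)` and
`y / 2 ^ (k + 1)` agree, i.e. when `x` and `y` lie in the same dyadic block of length `2 ^ (k + 1)`.
Hence `d` is an ultrametric, and `d u v ≤ d x y` whenever `[u, v] ⊆ [x, y]`, since dyadic blocks are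
intervals. For a monotone chain, induction on its length then gives
`d (b 1) (b (n + 1)) = d (b n) (b (n + 1)) ⊔ d (b 1) (b n)`: `≤` is the ultrametric inequality and
`≥` is the interval monotonicity.
-/

/-- `delta a b = i + 1` where `i` is the most significant bit at which the binary
expansions of `a - 1` and `b - 1` differ (for `a ≠ b`). -/
def delta (a b : ℕ) : ℕ := Nat.log2 ((a - 1) ^^^ (b - 1)) + 1

theorem Finset.sup_Icc_chain_eq {α β : Type*} [Preorder α] [SemilatticeSup β] [OrderBot β]
    {d : α → α → β} (ultra : ∀ x y z, d x z ≤ d x y ⊔ d y z)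
    (nested : ∀ {x u v y}, x ≤ u → u ≤ v → v ≤ y → d u v ≤ d x y)
    {b : ℕ → α} {n : ℕ} (hn : 2 ≤ n) (hb : MonotoneOn b (Set.Icc 1 n)) :
    d (b 1) (b n) = (Finset.Icc 1 (n - 1)).sup fun i => d (b i) (b (i + 1)) := by
  induction n, hn using Nat.le_induction with
  | base => simp
  | succ n hn ih =>
    have h1n : b 1 ≤ b n := hb ⟨le_rfl, by omega⟩ ⟨by omega, by omega⟩ (by omega)
    have hnn : b n ≤ b (n + 1) := hb ⟨by omega, by omega⟩ ⟨by omega, le_rfl⟩ (by omega)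
    rw [Nat.add_sub_cancel, ← Finset.insert_Icc_sub_one_right_eq_Icc (by omega : 1 ≤ n),
      Finset.sup_insert, ← ih (hb.mono (Set.Icc_subset_Icc_right (by omega)))]
    exact le_antisymm ((ultra _ (b n) _).trans_eq (sup_comm _ _))
      (sup_le (nested h1n hnn le_rfl) (nested le_rfl h1n hnn))

namespace Nat

theorem log2_le_iff_lt_two_pow {a m : ℕ} : a.log2 ≤ m ↔ a < 2 ^ (m + 1) := by
  rcases eq_or_ne a 0 with rfl | ha
  · simp [Nat.log2_zero]
  · rw [← Nat.log2_lt ha, Nat.lt_succ_iff]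

theorem xor_lt_two_pow_iff_div_eq {x y k : ℕ} : x ^^^ y < 2 ^ k ↔ x / 2 ^ k = y / 2 ^ k := by
  rw [← Nat.xor_eq_zero_iff, ← Nat.xor_div_two_pow, Nat.div_eq_zero_iff]
  simp

theorem log2_xor_le_sup (x y z : ℕ) : (x ^^^ z).log2 ≤ (x ^^^ y).log2 ⊔ (y ^^^ z).log2 := by
  set m := (x ^^^ y).log2 ⊔ (y ^^^ z).log2
  have hxy : x / 2 ^ (m + 1) = y / 2 ^ (m + 1) :=
    xor_lt_two_pow_iff_div_eq.1 (log2_le_iff_lt_two_pow.1 le_sup_left)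
  have hyz : y / 2 ^ (m + 1) = z / 2 ^ (m + 1) :=
    xor_lt_two_pow_iff_div_eq.1 (log2_le_iff_lt_two_pow.1 le_sup_right)
  exact log2_le_iff_lt_two_pow.2 (xor_lt_two_pow_iff_div_eq.2 (hxy.trans hyz))

theorem log2_xor_le_of_nested {x u v y : ℕ} (hxu : x ≤ u) (huv : u ≤ v) (hvy : v ≤ y) :
    (u ^^^ v).log2 ≤ (x ^^^ y).log2 := by
  refine log2_le_iff_lt_two_pow.2 (xor_lt_two_pow_iff_div_eq.2 ?_)
  have hxy := xor_lt_two_pow_iff_div_eq.1 (log2_le_iff_lt_two_pow.1 (le_refl (x ^^^ y).log2))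
  have hxu' := Nat.div_le_div_right (c := 2 ^ ((x ^^^ y).log2 + 1)) hxu
  have huv' := Nat.div_le_div_right (c := 2 ^ ((x ^^^ y).log2 + 1)) huv
  have hvy' := Nat.div_le_div_right (c := 2 ^ ((x ^^^ y).log2 + 1)) hvy
  omega

end Nat

theorem delta_le_sup (x y z : ℕ) : delta x z ≤ delta x y ⊔ delta y z := by
  have := Nat.log2_xor_le_sup (x - 1) (y - 1) (z - 1)
  simp only [delta]
  omega

theorem delta_le_of_nested {x u v y : ℕ} (hxu : x ≤ u) (huv : u ≤ v) (hvy : v ≤ y) :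
    delta u v ≤ delta x y :=
  Nat.add_le_add_right (Nat.log2_xor_le_of_nested (Nat.sub_le_sub_right hxu 1)
    (Nat.sub_le_sub_right huv 1) (Nat.sub_le_sub_right hvy 1)) 1

theorem stmt_4_general (n : ℕ) (a : ℕ → ℕ) (hn : 2 ≤ n)
    (hmono : ∀ i, 1 ≤ i → i < n → a i < a (i + 1)) :
    delta (a 1) (a n) = (Finset.Icc 1 (n - 1)).sup (fun i => delta (a i) (a (i + 1))) :=
  Finset.sup_Icc_chain_eq delta_le_sup delta_le_of_nested hn <|
    monotoneOn_of_le_add_one Set.ordConnected_Icc fun i _ hi hi1 => (hmono i hi.1 hi1.2).le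

/-- Property B of the stepping-up lemma: for `1 ≤ a 1 < a 2 < ... < a n ≤ 2^N`,
`δ(a 1, a n)` equals the maximum of `δ(a i, a (i+1))` over `1 ≤ i ≤ n - 1`. -/
theorem stmt_4 (N n : ℕ) (a : ℕ → ℕ) (hn : 2 ≤ n)
    (ha1 : 1 ≤ a 1) (haN : a n ≤ 2 ^ N)
    (hmono : ∀ i, 1 ≤ i → i < n → a i < a (i + 1)) :
    delta (a 1) (a n) = (Finset.Icc 1 (n - 1)).sup (fun i => delta (a i) (a (i + 1))) :=
  stmt_4_general n a hn hmono
end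

section
/- Let δ₁, ..., δ_{2n-2} be a sequence of positive integers in which no two consecutive terms are equal (δ_i ≠ δ_{i+1}) and which contains no monotone (strictly increasing or strictly decreasing) consecutive run of length n. Then there exists an index 2 ≤ i ≤ 2n-3 that is a local maximum, i.e., δ_{i-1} < δ_i > δ_{i+1}. -/
/-- A sequence `δ 1, ..., δ (2n-2)` of positive integers with no two consecutive terms
equal and no monotone consecutive run of length `n` has a local maximum
`δ (i-1) < δ i > δ (i+1)` at some index `2 ≤ i ≤ 2n - 3`. -/
theorem stmt_5 (n : ℕ) (δ : ℕ → ℕ) (hn : 2 ≤ n)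
    (hpos : ∀ i, 1 ≤ i → i ≤ 2 * n - 2 → 1 ≤ δ i)
    (hne : ∀ i, 1 ≤ i → i < 2 * n - 2 → δ i ≠ δ (i + 1))
    (hrun : ∀ j, 1 ≤ j → j + n - 1 ≤ 2 * n - 2 →
      ¬ ((∀ i, j ≤ i → i < j + n - 1 → δ i < δ (i + 1)) ∨
         (∀ i, j ≤ i → i < j + n - 1 → δ (i + 1) < δ i))) :
    ∃ i, 2 ≤ i ∧ i ≤ 2 * n - 3 ∧ δ (i - 1) < δ i ∧ δ (i + 1) < δ i := by
  by_contra hmax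
  push_neg at hmax
  have tri : ∀ i, 1 ≤ i → i < 2 * n - 2 → δ i < δ (i + 1) ∨ δ (i + 1) < δ i :=
    fun i h1 h2 => lt_or_gt_of_ne (hne i h1 h2)
  have absorb : ∀ i, 1 ≤ i → i + 1 ≤ 2 * n - 3 → δ i < δ (i + 1) → δ (i + 1) < δ (i + 2) := by
    intro i h1 h2 hup
    have h := hmax (i + 1) (by omega) h2
    simp only [Nat.add_sub_cancel] at h
    have h' := h hup
    rcases tri (i + 1) (by omega) (by omega) with hc | hc
    · exact hc
    · omega
  by_cases hk : ∃ k, 1 ≤ k ∧ k ≤ n - 1 ∧ δ k < δ (k + 1)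
  · obtain ⟨k, hk1, hk2, hku⟩ := hk
    have up : ∀ i, k ≤ i → i ≤ 2 * n - 3 → δ i < δ (i + 1) := by
      intro i hi
      induction i, hi using Nat.le_induction with
      | base => intro _; exact hku
      | succ m hm ih =>
        intro hm2
        exact absorb m (by omega) (by omega) (ih (by omega))
    exact hrun (n - 1) (by omega) (by omega)
      (Or.inl (fun i hi1 hi2 => up i (by omega) (by omega)))
  · push_neg at hk
    refine hrun 1 le_rfl (by omega) (Or.inr (fun i hi1 hi2 => ?_))
    rcases tri i hi1 (by omega) with h | h
    · exact absurd h (by simpa using (hk i hi1 (by omega)).not_gt)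
    · exact h
end

section
/- Let N = C(s + n - 4, s - 2) + 1 and let the triples of {1, ..., N} be 2-colored red/blue such that the coloring is transitive: for i₁ < i₂ < i₃ < i₄, if (i₁,i₂,i₃) and (i₂,i₃,i₄) have the same color then (i₁,i₂,i₄) and (i₁,i₃,i₄) also have that color. Then there exists a red clique of size s or a blue clique of size n. -/
/-!
Induction on `s + n`, as in the cups-and-caps proof of Erdős–Szekeres. Let `E ⊆ X` be the set of
tops of red `(s - 1)`-cliques. Then `X \ E` has no red `(s - 1)`-clique, so if it has more than
`C(s + n - 5, s - 3)` elements it contains a blue `n`-clique. Otherwise, by Pascal's rule, `E` has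
more than `C(s + n - 5, s - 2)` elements and so contains a red `s`-clique or a blue `(n - 1)`-clique
`T`. In the last case the least element `p` of `T` is the top of a red `(s - 1)`-clique `C`. Let
`p'` be the element of `C` just below `p` and `q` the element of `T` just above `p`: by
transitivity, `C ∪ {q}` is a red clique if `(p', p, q)` is red, and `{p'} ∪ T` is a blue clique
otherwise.
-/

open Finset

variable {α κ : Type*} [LinearOrder α]

def IsTransitiveOn (χ : α → α → α → κ) (X : Finset α) : Prop :=
  ∀ a ∈ X, ∀ b ∈ X, ∀ c ∈ X, ∀ d ∈ X, a < b → b < c → c < d → χ a b c = χ b c d →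
    χ a b d = χ a b c ∧ χ a c d = χ a b c

def IsMonoClique (χ : α → α → α → κ) (c : κ) (S : Finset α) : Prop :=
  ∀ i ∈ S, ∀ j ∈ S, ∀ k ∈ S, i < j → j < k → χ i j k = c

section

variable {χ : α → α → α → κ} {c : κ} {S X Y : Finset α}

theorem IsTransitiveOn.mono (h : IsTransitiveOn χ X) (hYX : Y ⊆ X) : IsTransitiveOn χ Y :=
  fun a ha b hb c hc d hd => h a (hYX ha) b (hYX hb) c (hYX hc) d (hYX hd)

theorem isMonoClique_of_card_le_two (hS : #S ≤ 2) : IsMonoClique χ c S :=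
  fun i hi j hj k hk hij hjk => absurd
    (two_lt_card.2 ⟨i, hi, j, hj, k, hk, hij.ne, (hij.trans hjk).ne, hjk.ne⟩) hS.not_gt

theorem IsMonoClique.insert_above {p' p q : α} (hχ : IsTransitiveOn χ (insert q S))
    (hS : IsMonoClique χ c S) (hp' : p' ∈ S) (hp : p ∈ S) (hp'p : p' < p)
    (hle : ∀ b ∈ S, b ≠ p → b ≤ p') (hpq : p < q) (hcol : χ p' p q = c) :
    IsMonoClique χ c (insert q S) := by
  have hlt : ∀ b ∈ S, b < q := fun b hb => by
    rcases eq_or_ne b p with rfl | hbp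
    · exact hpq
    · exact (hle b hb hbp).trans_lt (hp'p.trans hpq)
  have mem (b) (hb : b ∈ S) : b ∈ insert q S := mem_insert_of_mem hb
  have hq : q ∈ insert q S := mem_insert_self q S
  have with_p : ∀ i ∈ S, i < p → χ i p q = c := by
    intro i hi hip
    rcases (hle i hi hip.ne).eq_or_lt with rfl | hip'
    · exact hcol
    · have hred := hS i hi p' hp' p hp hip' hp'p
      rw [(hχ i (mem i hi) p' (mem p' hp') p (mem p hp) q hq hip' hp'p hpq
        (hred.trans hcol.symm)).2, hred]
  have with_q : ∀ i ∈ S, ∀ j ∈ S, i < j → χ i j q = c := by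
    intro i hi j hj hij
    rcases eq_or_ne j p with rfl | hjp
    · exact with_p i hi hij
    · have hjp : j < p := (hle j hj hjp).trans_lt hp'p
      have hred := hS i hi j hj p hp hij hjp
      rw [(hχ i (mem i hi) j (mem j hj) p (mem p hp) q hq hij hjp hpq
        (hred.trans (with_p j hj hjp).symm)).1, hred]
  have mem_of_lt : ∀ x ∈ insert q S, ∀ y ∈ insert q S, x < y → x ∈ S := by
    intro x hx y hy hxy
    rcases mem_insert.1 hx with rfl | hx
    · rcases mem_insert.1 hy with rfl | hy
      · exact absurd hxy (lt_irrefl _)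
      · exact absurd hxy (hlt y hy).not_gt
    · exact hx
  intro i hi j hj k hk hij hjk
  have hiS := mem_of_lt i hi j hj hij
  have hjS := mem_of_lt j hj k hk hjk
  rcases mem_insert.1 hk with rfl | hkS
  · exact with_q i hiS j hjS hij
  · exact hS i hiS j hjS k hkS hij hjk

theorem IsMonoClique.insert_below {p' p q : α} (hχ : IsTransitiveOn χ (insert p' S))
    (hS : IsMonoClique χ c S) (hp : p ∈ S) (hq : q ∈ S) (hpq : p < q)
    (hle : ∀ b ∈ S, b ≠ p → q ≤ b) (hp'p : p' < p) (hcol : χ p' p q = c) :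
    IsMonoClique χ c (insert p' S) := by
  have hgt : ∀ b ∈ S, p' < b := fun b hb => by
    rcases eq_or_ne b p with rfl | hbp
    · exact hp'p
    · exact (hp'p.trans hpq).trans_le (hle b hb hbp)
  have mem (b) (hb : b ∈ S) : b ∈ insert p' S := mem_insert_of_mem hb
  have hp' : p' ∈ insert p' S := mem_insert_self p' S
  have above_q : ∀ k ∈ S, q < k → χ p' p k = c ∧ χ p' q k = c := by
    intro k hk hqk
    have h := hχ p' hp' p (mem p hp) q (mem q hq) k (mem k hk) hp'p hpq hqk
      (hcol.trans (hS p hp q hq k hk hpq hqk).symm)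
    exact ⟨h.1.trans hcol, h.2.trans hcol⟩
  have with_p' : ∀ j ∈ S, ∀ k ∈ S, j < k → χ p' j k = c := by
    intro j hj k hk hjk
    rcases eq_or_ne j p with rfl | hjp
    · rcases (hle k hk hjk.ne').eq_or_lt with rfl | hqk
      · exact hcol
      · exact (above_q k hk hqk).1
    rcases (hle j hj hjp).eq_or_lt with rfl | hqj
    · exact (above_q k hk hjk).2
    · have hblue := (above_q j hj hqj).2
      rw [(hχ p' hp' q (mem q hq) j (mem j hj) k (mem k hk) (hp'p.trans hpq) hqj hjk
        (hblue.trans (hS q hq j hj k hk hqj hjk).symm)).2, hblue]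
  have mem_of_lt : ∀ x ∈ insert p' S, ∀ y ∈ insert p' S, x < y → y ∈ S := by
    intro x hx y hy hxy
    rcases mem_insert.1 hy with rfl | hy
    · rcases mem_insert.1 hx with rfl | hx
      · exact absurd hxy (lt_irrefl _)
      · exact absurd hxy (hgt x hx).not_gt
    · exact hy
  intro i hi j hj k hk hij hjk
  have hjS := mem_of_lt i hi j hj hij
  have hkS := mem_of_lt j hj k hk hjk
  rcases mem_insert.1 hi with rfl | hiS
  · exact with_p' j hjS k hkS hjk
  · exact hS i hiS j hjS k hkS hij hjk

end

def HasRedOrBlueClique (χ : α → α → α → Bool) (X : Finset α) (s n : ℕ) : Prop :=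
  ∃ S ⊆ X, (#S = s ∧ IsMonoClique χ true S) ∨ (#S = n ∧ IsMonoClique χ false S)

section

variable {χ : α → α → α → Bool} {X Y : Finset α}

theorem HasRedOrBlueClique.mono {s n : ℕ} (h : HasRedOrBlueClique χ X s n) (hXY : X ⊆ Y) :
    HasRedOrBlueClique χ Y s n :=
  let ⟨S, hSX, hS⟩ := h
  ⟨S, hSX.trans hXY, hS⟩

theorem hasRedOrBlueClique_two_left (n : ℕ) (hX : 2 ≤ #X) : HasRedOrBlueClique χ X 2 n :=
  let ⟨S, hSX, hS⟩ := exists_subset_card_eq hX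
  ⟨S, hSX, .inl ⟨hS, isMonoClique_of_card_le_two hS.le⟩⟩

theorem hasRedOrBlueClique_two_right (s : ℕ) (hX : 2 ≤ #X) : HasRedOrBlueClique χ X s 2 :=
  let ⟨S, hSX, hS⟩ := exists_subset_card_eq hX
  ⟨S, hSX, .inr ⟨hS, isMonoClique_of_card_le_two hS.le⟩⟩

theorem hasRedOrBlueClique_of_isGreatest_of_isLeast {C T : Finset α} {p : α}
    (hχ : IsTransitiveOn χ (C ∪ T)) (hC : IsMonoClique χ true C) (hT : IsMonoClique χ false T)
    (hpC : IsGreatest (C : Set α) p) (hpT : IsLeast (T : Set α) p)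
    (hC2 : 2 ≤ #C) (hT2 : 2 ≤ #T) :
    HasRedOrBlueClique χ (C ∪ T) (#C + 1) (#T + 1) := by
  have hCp : (C.erase p).Nonempty := by
    rw [← card_pos, card_erase_of_mem hpC.1]; omega
  have hTp : (T.erase p).Nonempty := by
    rw [← card_pos, card_erase_of_mem hpT.1]; omega
  set p' := (C.erase p).max' hCp
  set q := (T.erase p).min' hTp
  obtain ⟨hp'ne, hp'C⟩ := mem_erase.1 ((C.erase p).max'_mem hCp)
  obtain ⟨hqne, hqT⟩ := mem_erase.1 ((T.erase p).min'_mem hTp)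
  have hp'p : p' < p := lt_of_le_of_ne (hpC.2 hp'C) hp'ne
  have hpq : p < q := lt_of_le_of_ne (hpT.2 hqT) hqne.symm
  have hleC : ∀ b ∈ C, b ≠ p → b ≤ p' := fun b hb hbp => le_max' _ b (mem_erase.2 ⟨hbp, hb⟩)
  have hleT : ∀ b ∈ T, b ≠ p → q ≤ b := fun b hb hbp => min'_le _ b (mem_erase.2 ⟨hbp, hb⟩)
  cases hcol : χ p' p q with
  | true =>
    have hqC : q ∉ C := fun hqC => (hpC.2 hqC).not_gt hpq
    have hsub : insert q C ⊆ C ∪ T := insert_subset (mem_union_right _ hqT) subset_union_left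
    exact ⟨_, hsub, .inl ⟨card_insert_of_notMem hqC,
      hC.insert_above (hχ.mono hsub) hp'C hpC.1 hp'p hleC hpq hcol⟩⟩
  | false =>
    have hp'T : p' ∉ T := fun hp'T => (hpT.2 hp'T).not_gt hp'p
    have hsub : insert p' T ⊆ C ∪ T := insert_subset (mem_union_left _ hp'C) subset_union_right
    exact ⟨_, hsub, .inr ⟨card_insert_of_notMem hp'T,
      hT.insert_below (hχ.mono hsub) hpT.1 hqT hpq hleT hp'p hcol⟩⟩

theorem hasRedOrBlueClique_of_choose_lt (hχ : IsTransitiveOn χ X) (a b : ℕ)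
    (hX : (a + b).choose a < #X) : HasRedOrBlueClique χ X (a + 2) (b + 2) := by
  induction a generalizing b X with
  | zero => exact hasRedOrBlueClique_two_left _ (by rwa [Nat.choose_zero_right] at hX)
  | succ a iha =>
  induction b generalizing X with
  | zero => exact hasRedOrBlueClique_two_right _ (by rwa [add_zero, Nat.choose_self] at hX)
  | succ b ihb =>
  classical
  set E := X.filter fun x => ∃ C ⊆ X, #C = a + 2 ∧ IsMonoClique χ true C ∧ IsGreatest (C : Set α) x
  have hEX : E ⊆ X := filter_subset _ _
  by_cases hXE : (a + (b + 1)).choose a < #(X \ E)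
  · obtain ⟨S, hSXE, hred | hblue⟩ := iha (hχ.mono sdiff_subset) (b + 1) hXE
    · have hS : S.Nonempty := by rw [← card_pos]; omega
      have hmax : S.max' hS ∈ E := mem_filter.2 ⟨(mem_sdiff.1 (hSXE (S.max'_mem hS))).1,
        S, hSXE.trans sdiff_subset, hred.1, hred.2, S.max'_mem hS, fun y hy => S.le_max' y hy⟩
      exact absurd hmax (mem_sdiff.1 (hSXE (S.max'_mem hS))).2
    · exact ⟨S, hSXE.trans sdiff_subset, .inr hblue⟩
  have hE : (a + 1 + b).choose (a + 1) < #E := by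
    have hpascal := Nat.choose_succ_succ' (a + b + 1) a
    have hsplit := card_sdiff_add_card_eq_card hEX
    rw [show a + 1 + (b + 1) = a + b + 1 + 1 by omega] at hX
    rw [show a + (b + 1) = a + b + 1 by omega] at hXE
    rw [show a + 1 + b = a + b + 1 by omega]
    omega
  obtain ⟨T, hTE, hred | ⟨hTcard, hT⟩⟩ := ihb (hχ.mono hEX) hE
  · exact ⟨T, hTE.trans hEX, .inl hred⟩
  have hTne : T.Nonempty := by rw [← card_pos]; omega
  obtain ⟨-, C, hCX, hCcard, hC, hpC⟩ := mem_filter.1 (hTE (T.min'_mem hTne))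
  have hpT : IsLeast (T : Set α) (T.min' hTne) := ⟨T.min'_mem hTne, fun y hy => T.min'_le y hy⟩
  have hglue := hasRedOrBlueClique_of_isGreatest_of_isLeast
    (hχ.mono (union_subset hCX (hTE.trans hEX))) hC hT hpC hpT (by omega) (by omega)
  rw [hCcard, hTcard] at hglue
  exact hglue.mono (union_subset hCX (hTE.trans hEX))

end

/-- For `N = C(s + n - 4, s - 2) + 1`, every transitive 2-coloring of the increasing
triples of `{1, ..., N}` contains a red clique of size `s` or a blue clique of size `n`. -/
theorem stmt_7 (s n : ℕ) (hs : 2 ≤ s) (hn : 2 ≤ n)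
    (N : ℕ) (hN : N = Nat.choose (s + n - 4) (s - 2) + 1)
    (χ : ℕ → ℕ → ℕ → Bool)
    (htrans : ∀ i₁ i₂ i₃ i₄, 1 ≤ i₁ → i₁ < i₂ → i₂ < i₃ → i₃ < i₄ → i₄ ≤ N →
      χ i₁ i₂ i₃ = χ i₂ i₃ i₄ →
      χ i₁ i₂ i₄ = χ i₁ i₂ i₃ ∧ χ i₁ i₃ i₄ = χ i₁ i₂ i₃) :
    ∃ S ⊆ Finset.Icc 1 N,
      (S.card = s ∧ ∀ i ∈ S, ∀ j ∈ S, ∀ k ∈ S, i < j → j < k → χ i j k = true) ∨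
      (S.card = n ∧ ∀ i ∈ S, ∀ j ∈ S, ∀ k ∈ S, i < j → j < k → χ i j k = false) := by
  obtain ⟨a, rfl⟩ := Nat.exists_eq_add_of_le' hs
  obtain ⟨b, rfl⟩ := Nat.exists_eq_add_of_le' hn
  have hχ : IsTransitiveOn χ (Icc 1 N) := fun i₁ h₁ i₂ _ i₃ _ i₄ h₄ h₁₂ h₂₃ h₃₄ =>
    htrans i₁ i₂ i₃ i₄ (mem_Icc.1 h₁).1 h₁₂ h₂₃ h₃₄ (mem_Icc.1 h₄).2
  exact hasRedOrBlueClique_of_choose_lt hχ a b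
    (by simp [hN, show a + 2 + (b + 2) - 4 = a + b by omega])
end

section
/- Let H = (V, E) be a 3-uniform hypergraph on N vertices with |E| ≥ N/3. Then H contains an independent set of size at least (2N/3)·(N/(3|E|))^{1/2}. -/
open Finset

lemma aux_binom {V : Type*} [DecidableEq V] (s : Finset V) (x y : ℝ) :
    ∑ T ∈ s.powerset, x ^ T.card * y ^ (s.card - T.card) = (x + y) ^ s.card := by
  rw [← Finset.prod_const, Finset.prod_add]
  apply Finset.sum_congr rfl
  intro T hT
  rw [Finset.prod_const, Finset.prod_const, Finset.card_sdiff_of_subset (Finset.mem_powerset.mp hT)]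

lemma aux_sumA {V : Type*} [Fintype V] [DecidableEq V] (p : ℝ) (A : Finset V) :
    ∑ S ∈ (univ : Finset V).powerset.filter (A ⊆ ·),
      p ^ S.card * (1 - p) ^ (Fintype.card V - S.card) = p ^ A.card := by
  have key : ∑ S ∈ (univ : Finset V).powerset.filter (A ⊆ ·),
      p ^ S.card * (1 - p) ^ (Fintype.card V - S.card)
      = ∑ T ∈ ((univ : Finset V) \ A).powerset,
        p ^ (A.card + T.card) * (1 - p) ^ (((univ : Finset V) \ A).card - T.card) := by
    refine Finset.sum_nbij' (fun S => S \ A) (fun T => T ∪ A) ?_ ?_ ?_ ?_ ?_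
    · intro S hS
      simp only [mem_filter, mem_powerset] at hS
      exact mem_powerset.mpr (sdiff_subset_sdiff hS.1 (Finset.Subset.refl _))
    · intro T hT
      simp only [mem_powerset] at hT
      simp only [mem_filter, mem_powerset]
      exact ⟨subset_univ _, subset_union_right⟩
    · intro S hS
      simp only [mem_filter, mem_powerset] at hS
      exact sdiff_union_of_subset hS.2
    · intro T hT
      simp only [mem_powerset] at hT
      refine Finset.union_sdiff_cancel_right ?_
      exact Finset.disjoint_of_subset_left hT sdiff_disjoint
    · intro S hS
      simp only [mem_filter, mem_powerset] at hS
      have h1 : (S \ A).card = S.card - A.card := card_sdiff_of_subset hS.2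
      have hA : A.card ≤ S.card := card_le_card hS.2
      have hS' : S.card ≤ Fintype.card V := by simpa using card_le_card (subset_univ S)
      have h2 : ((univ : Finset V) \ A).card = Fintype.card V - A.card := by
        rw [card_sdiff_of_subset (subset_univ A), Finset.card_univ]
      rw [h1, h2]
      congr 1 <;> congr 1 <;> omega
  rw [key]
  have : ∀ T ∈ ((univ : Finset V) \ A).powerset,
      p ^ (A.card + T.card) * (1 - p) ^ (((univ : Finset V) \ A).card - T.card)
      = p ^ A.card * (p ^ T.card * (1 - p) ^ (((univ : Finset V) \ A).card - T.card)) := by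
    intro T _; ring
  rw [Finset.sum_congr rfl this, ← Finset.mul_sum, aux_binom]
  simp

/-- Spencer's lemma: a 3-uniform hypergraph on `N` vertices with at least `N/3` edges
contains an independent set of size at least `(2N/3) * sqrt (N / (3|E|))`. -/
theorem stmt_8 {V : Type*} [Fintype V] [DecidableEq V]
    (E : Finset (Finset V)) (hE3 : ∀ e ∈ E, e.card = 3)
    (hEcard : (Fintype.card V : ℝ) / 3 ≤ E.card) :
    ∃ S : Finset V, (∀ e ∈ E, ¬ e ⊆ S) ∧
      (2 * (Fintype.card V : ℝ) / 3) *
          Real.sqrt ((Fintype.card V : ℝ) / (3 * E.card)) ≤ S.card := by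
  classical
  set N := Fintype.card V with hN
  set m := E.card with hm
  by_cases hm0 : m = 0
  · have hE : E = ∅ := Finset.card_eq_zero.mp hm0
    have hN0 : N = 0 := by
      rw [hm0] at hEcard
      push_cast at hEcard
      have : (N : ℝ) ≤ 0 := by linarith
      exact_mod_cast le_antisymm (by exact_mod_cast this) (Nat.zero_le _)
    refine ⟨∅, ?_, ?_⟩
    · intro e he; simp [hE] at he
    · simp [hN0]
  have hm1 : (1:ℝ) ≤ m := by exact_mod_cast Nat.one_le_iff_ne_zero.mpr hm0
  have hmR : (0:ℝ) < 3 * m := by linarith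
  set p := Real.sqrt ((N:ℝ) / (3*m)) with hp
  have hp0 : 0 ≤ p := Real.sqrt_nonneg _
  have hp2 : p^2 = (N:ℝ)/(3*m) := Real.sq_sqrt (by positivity)
  have hNle : (N:ℝ) ≤ 3*m := by linarith
  have hp1 : p ≤ 1 := by
    nlinarith [hp2, hp0, div_le_one_of_le₀ hNle (by linarith : (0:ℝ) ≤ 3*m)]
  set w : Finset V → ℝ := fun S => p ^ S.card * (1-p) ^ (N - S.card) with hw
  have hwpos : ∀ S, 0 ≤ w S := fun S =>
    mul_nonneg (pow_nonneg hp0 _) (pow_nonneg (by linarith) _)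
  have hsum1 : ∑ S ∈ (univ : Finset V).powerset, w S = 1 := by
    have h := aux_sumA (V := V) p (∅ : Finset V)
    rw [Finset.filter_true_of_mem (fun S _ => Finset.empty_subset S)] at h
    simpa using h
  have hsize : ∑ S ∈ (univ : Finset V).powerset, w S * S.card = p * N := by
    have hcard : ∀ S : Finset V, (S.card : ℝ) =
        ∑ v ∈ (univ : Finset V), (if v ∈ S then (1:ℝ) else 0) := by
      intro S; simp
    calc ∑ S ∈ (univ : Finset V).powerset, w S * S.card
        = ∑ S ∈ (univ : Finset V).powerset, ∑ v ∈ (univ : Finset V),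
            w S * (if v ∈ S then (1:ℝ) else 0) := by
          refine Finset.sum_congr rfl fun S _ => ?_
          rw [← Finset.mul_sum, ← hcard]
      _ = ∑ v ∈ (univ : Finset V), ∑ S ∈ (univ : Finset V).powerset,
            w S * (if v ∈ S then (1:ℝ) else 0) := Finset.sum_comm
      _ = ∑ v ∈ (univ : Finset V), p := by
          refine Finset.sum_congr rfl fun v _ => ?_
          have h1 : ∑ S ∈ (univ : Finset V).powerset, w S * (if v ∈ S then (1:ℝ) else 0)
              = ∑ S ∈ (univ : Finset V).powerset.filter (({v} : Finset V) ⊆ ·), w S := by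
            rw [Finset.sum_filter]
            refine Finset.sum_congr rfl fun S _ => ?_
            by_cases h : v ∈ S <;> simp [h, Finset.singleton_subset_iff]
          rw [h1, aux_sumA]
          simp
      _ = p * N := by simp [hN, Finset.card_univ, mul_comm]
  have hedge : ∑ S ∈ (univ : Finset V).powerset,
      w S * ((E.filter (· ⊆ S)).card : ℝ) = p ^ 3 * m := by
    have hcnt : ∀ S : Finset V, ((E.filter (· ⊆ S)).card : ℝ) =
        ∑ e ∈ E, (if e ⊆ S then (1:ℝ) else 0) := by
      intro S; simp [Finset.sum_boole]
    calc ∑ S ∈ (univ : Finset V).powerset, w S * ((E.filter (· ⊆ S)).card : ℝ)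
        = ∑ S ∈ (univ : Finset V).powerset, ∑ e ∈ E,
            w S * (if e ⊆ S then (1:ℝ) else 0) := by
          refine Finset.sum_congr rfl fun S _ => ?_
          rw [← Finset.mul_sum, ← hcnt]
      _ = ∑ e ∈ E, ∑ S ∈ (univ : Finset V).powerset,
            w S * (if e ⊆ S then (1:ℝ) else 0) := Finset.sum_comm
      _ = ∑ e ∈ E, p ^ 3 := by
          refine Finset.sum_congr rfl fun e he => ?_
          have h1 : ∑ S ∈ (univ : Finset V).powerset, w S * (if e ⊆ S then (1:ℝ) else 0)
              = ∑ S ∈ (univ : Finset V).powerset.filter (e ⊆ ·), w S := by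
            rw [Finset.sum_filter]
            refine Finset.sum_congr rfl fun S _ => ?_
            by_cases h : e ⊆ S <;> simp [h]
          rw [h1, aux_sumA, hE3 e he]
      _ = p ^ 3 * m := by rw [Finset.sum_const, hm, nsmul_eq_mul, mul_comm]
  have hkey : ∑ S ∈ (univ : Finset V).powerset,
      w S * ((S.card : ℝ) - ((E.filter (· ⊆ S)).card : ℝ)) = p * N - p ^ 3 * m := by
    simp_rw [mul_sub]
    rw [Finset.sum_sub_distrib, hsize, hedge]
  have hval : p * N - p ^ 3 * m = 2 * (N:ℝ) / 3 * p := by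
    have h3 : p ^ 3 * m = p * (N:ℝ) / 3 := by
      have : p ^ 3 = p * ((N:ℝ)/(3*m)) := by
        rw [show p ^ 3 = p * p ^ 2 by ring, hp2]
      rw [this]
      field_simp
    rw [h3]; ring
  have hex : ∃ S ∈ (univ : Finset V).powerset,
      2 * (N:ℝ) / 3 * p ≤ (S.card : ℝ) - ((E.filter (· ⊆ S)).card : ℝ) := by
    by_contra hc
    push_neg at hc
    obtain ⟨S₀, hS₀mem, hS₀⟩ := Finset.exists_ne_zero_of_sum_ne_zero
      (by rw [hsum1]; norm_num : ∑ S ∈ (univ : Finset V).powerset, w S ≠ 0)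
    have hlt : ∑ S ∈ (univ : Finset V).powerset,
        w S * ((S.card : ℝ) - ((E.filter (· ⊆ S)).card : ℝ))
        < ∑ S ∈ (univ : Finset V).powerset, w S * (2 * (N:ℝ) / 3 * p) := by
      refine Finset.sum_lt_sum (fun S hS => ?_) ⟨S₀, hS₀mem, ?_⟩
      · exact mul_le_mul_of_nonneg_left (le_of_lt (hc S hS)) (hwpos S)
      · exact mul_lt_mul_of_pos_left (hc S₀ hS₀mem) (lt_of_le_of_ne (hwpos S₀) (Ne.symm hS₀))
    rw [hkey, ← Finset.sum_mul, hsum1, one_mul, hval] at hlt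
    exact lt_irrefl _ hlt
  obtain ⟨S, _, hS⟩ := hex
  set rep : Finset V → Finset V := fun e => if h : e.Nonempty then {h.choose} else ∅ with hrep
  set D := (E.filter (· ⊆ S)).biUnion rep with hD
  have hDS : D ⊆ S := by
    intro v hv
    rw [hD, Finset.mem_biUnion] at hv
    obtain ⟨e, he, hve⟩ := hv
    rw [Finset.mem_filter] at he
    have hne : e.Nonempty := by
      rw [← Finset.card_pos, hE3 e he.1]; norm_num
    rw [hrep] at hve
    simp only [dif_pos hne, Finset.mem_singleton] at hve
    subst hve
    exact he.2 hne.choose_spec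
  refine ⟨S \ D, ?_, ?_⟩
  · intro e heE hsub
    have hne : e.Nonempty := by
      rw [← Finset.card_pos, hE3 e heE]; norm_num
    have heS : e ⊆ S := hsub.trans (Finset.sdiff_subset)
    have hrepD : hne.choose ∈ D := by
      rw [hD]
      refine Finset.mem_biUnion.mpr ⟨e, Finset.mem_filter.mpr ⟨heE, heS⟩, ?_⟩
      rw [hrep]; simp only [dif_pos hne, Finset.mem_singleton]
    have := hsub hne.choose_spec
    exact (Finset.mem_sdiff.mp this).2 hrepD
  · have hDcard : (D.card : ℝ) ≤ ((E.filter (· ⊆ S)).card : ℝ) := by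
      have h1 : D.card ≤ ∑ e ∈ E.filter (· ⊆ S), (rep e).card := Finset.card_biUnion_le
      have h2 : ∑ e ∈ E.filter (· ⊆ S), (rep e).card ≤ (E.filter (· ⊆ S)).card := by
        have := Finset.sum_le_card_nsmul (E.filter (· ⊆ S)) (fun e => (rep e).card) 1
          (fun e _ => by rw [hrep]; by_cases h : e.Nonempty <;> simp [h])
        simpa using this
      exact_mod_cast h1.trans h2
    have hsd : (((S \ D).card : ℝ)) = (S.card : ℝ) - D.card := by
      rw [Finset.card_sdiff_of_subset hDS, Nat.cast_sub (Finset.card_le_card hDS)]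
    rw [hsd]
    linarith
end

section
/- Let E be a ternary relation on a linearly ordered finite set P such that every 4-element subset of P induces at most two triples belonging to E (K⁽³⁾₄ minus an edge free). Suppose P₁, P₂, P₃ are disjoint subsets of P such that every transversal triple (p₁, p₂, p₃) with p_i ∈ P_i belongs to E. Then no triple with two elements in P₁ and one element in P₂, and no triple with one element in P₁ and two in P₂, belongs to E. -/
/-- If `(P, E)` is `K₄⁽³⁾∖e`-free (every four points induce at most two triples of `E`)
and all transversal triples of disjoint `P₁, P₂, P₃ ⊆ P` lie in `E`, then no triple with
two points in `P₁` and one in `P₂` (or one in `P₁` and two in `P₂`) lies in `E`. -/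
theorem stmt_12 {α : Type*} [LinearOrder α]
    (P P₁ P₂ P₃ : Finset α) (E : α → α → α → Prop)
    (hP₁ : P₁ ⊆ P) (hP₂ : P₂ ⊆ P) (hP₃ : P₃ ⊆ P)
    (h12 : Disjoint P₁ P₂) (h13 : Disjoint P₁ P₃) (h23 : Disjoint P₂ P₃)
    (hP₃ne : P₃.Nonempty)
    (hfree : ∀ a ∈ P, ∀ b ∈ P, ∀ c ∈ P, ∀ d ∈ P, a < b → b < c → c < d →
      ¬ (E a b c ∧ E a b d ∧ E a c d) ∧ ¬ (E a b c ∧ E a b d ∧ E b c d) ∧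
      ¬ (E a b c ∧ E a c d ∧ E b c d) ∧ ¬ (E a b d ∧ E a c d ∧ E b c d))
    (htrans : ∀ x y z : α, x < y → y < z →
      ((x ∈ P₁ ∧ y ∈ P₂ ∧ z ∈ P₃) ∨ (x ∈ P₁ ∧ y ∈ P₃ ∧ z ∈ P₂) ∨
       (x ∈ P₂ ∧ y ∈ P₁ ∧ z ∈ P₃) ∨ (x ∈ P₂ ∧ y ∈ P₃ ∧ z ∈ P₁) ∨
       (x ∈ P₃ ∧ y ∈ P₁ ∧ z ∈ P₂) ∨ (x ∈ P₃ ∧ y ∈ P₂ ∧ z ∈ P₁)) → E x y z) :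
    ∀ x y z : α, x < y → y < z →
      ((x ∈ P₁ ∧ y ∈ P₁ ∧ z ∈ P₂) ∨ (x ∈ P₁ ∧ y ∈ P₂ ∧ z ∈ P₁) ∨
       (x ∈ P₂ ∧ y ∈ P₁ ∧ z ∈ P₁) ∨ (x ∈ P₁ ∧ y ∈ P₂ ∧ z ∈ P₂) ∨
       (x ∈ P₂ ∧ y ∈ P₁ ∧ z ∈ P₂) ∨ (x ∈ P₂ ∧ y ∈ P₂ ∧ z ∈ P₁)) → ¬ E x y z := by
  intro x y z hxy hyz hmem hE
  obtain ⟨w, hw⟩ := hP₃ne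
  have hw1 : w ∉ P₁ := Finset.disjoint_right.mp h13 hw
  have hw2 : w ∉ P₂ := Finset.disjoint_right.mp h23 hw
  have hwP : w ∈ P := hP₃ hw
  rcases hmem with ⟨m1,m2,m3⟩|⟨m1,m2,m3⟩|⟨m1,m2,m3⟩|⟨m1,m2,m3⟩|⟨m1,m2,m3⟩|⟨m1,m2,m3⟩
  · -- pattern ('1', '1', '2')
    have hxP : x ∈ P := hP₁ m1
    have hyP : y ∈ P := hP₁ m2
    have hzP : z ∈ P := hP₂ m3
    rcases lt_trichotomy w x with hwx | heq | hxw
    · 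
      have e2 : E w x z := htrans w x z hwx (hxy.trans hyz) (Or.inr (Or.inr (Or.inr (Or.inr (Or.inl ⟨hw, m1, m3⟩)))))
      have e3 : E w y z := htrans w y z (hwx.trans hxy) hyz (Or.inr (Or.inr (Or.inr (Or.inr (Or.inl ⟨hw, m2, m3⟩)))))
      have H := hfree w hwP x hxP y hyP z hzP hwx hxy hyz
      exact H.2.2.2 ⟨e2, e3, hE⟩
    · 
      exact hw1 (heq ▸ m1)
    · rcases lt_trichotomy w y with hwy | heq | hyw
      · 
        have e2 : E x w z := htrans x w z hxw (hwy.trans hyz) (Or.inr (Or.inl ⟨m1, hw, m3⟩))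
        have e3 : E w y z := htrans w y z hwy hyz (Or.inr (Or.inr (Or.inr (Or.inr (Or.inl ⟨hw, m2, m3⟩)))))
        have H := hfree x hxP w hwP y hyP z hzP hxw hwy hyz
        exact H.2.2.2 ⟨e2, hE, e3⟩
      · 
        exact hw1 (heq ▸ m2)
      · rcases lt_trichotomy w z with hwz | heq | hzw
        · 
          have e2 : E x w z := htrans x w z (hxy.trans hyw) hwz (Or.inr (Or.inl ⟨m1, hw, m3⟩))
          have e3 : E y w z := htrans y w z hyw hwz (Or.inr (Or.inl ⟨m2, hw, m3⟩))
          have H := hfree x hxP y hyP w hwP z hzP hxy hyw hwz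
          exact H.2.2.2 ⟨hE, e2, e3⟩
        · 
          exact hw2 (heq ▸ m3)
        · 
          have e2 : E x z w := htrans x z w (hxy.trans hyz) hzw (Or.inl ⟨m1, m3, hw⟩)
          have e3 : E y z w := htrans y z w hyz hzw (Or.inl ⟨m2, m3, hw⟩)
          have H := hfree x hxP y hyP z hzP w hwP hxy hyz hzw
          exact H.2.2.1 ⟨hE, e2, e3⟩
  · -- pattern ('1', '2', '1')
    have hxP : x ∈ P := hP₁ m1
    have hyP : y ∈ P := hP₂ m2
    have hzP : z ∈ P := hP₁ m3
    rcases lt_trichotomy w x with hwx | heq | hxw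
    · 
      have e2 : E w x y := htrans w x y hwx hxy (Or.inr (Or.inr (Or.inr (Or.inr (Or.inl ⟨hw, m1, m2⟩)))))
      have e3 : E w y z := htrans w y z (hwx.trans hxy) hyz (Or.inr (Or.inr (Or.inr (Or.inr (Or.inr (⟨hw, m2, m3⟩))))))
      have H := hfree w hwP x hxP y hyP z hzP hwx hxy hyz
      exact H.2.2.1 ⟨e2, e3, hE⟩
    · 
      exact hw1 (heq ▸ m1)
    · rcases lt_trichotomy w y with hwy | heq | hyw
      · 
        have e2 : E x w y := htrans x w y hxw hwy (Or.inr (Or.inl ⟨m1, hw, m2⟩))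
        have e3 : E w y z := htrans w y z hwy hyz (Or.inr (Or.inr (Or.inr (Or.inr (Or.inr (⟨hw, m2, m3⟩))))))
        have H := hfree x hxP w hwP y hyP z hzP hxw hwy hyz
        exact H.2.2.1 ⟨e2, hE, e3⟩
      · 
        exact hw2 (heq ▸ m2)
      · rcases lt_trichotomy w z with hwz | heq | hzw
        · 
          have e2 : E x y w := htrans x y w hxy hyw (Or.inl ⟨m1, m2, hw⟩)
          have e3 : E y w z := htrans y w z hyw hwz (Or.inr (Or.inr (Or.inr (Or.inl ⟨m2, hw, m3⟩))))
          have H := hfree x hxP y hyP w hwP z hzP hxy hyw hwz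
          exact H.2.1 ⟨e2, hE, e3⟩
        · 
          exact hw1 (heq ▸ m3)
        · 
          have e2 : E x y w := htrans x y w hxy (hyz.trans hzw) (Or.inl ⟨m1, m2, hw⟩)
          have e3 : E y z w := htrans y z w hyz hzw (Or.inr (Or.inr (Or.inl ⟨m2, m3, hw⟩)))
          have H := hfree x hxP y hyP z hzP w hwP hxy hyz hzw
          exact H.2.1 ⟨hE, e2, e3⟩
  · -- pattern ('2', '1', '1')
    have hxP : x ∈ P := hP₂ m1
    have hyP : y ∈ P := hP₁ m2
    have hzP : z ∈ P := hP₁ m3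
    rcases lt_trichotomy w x with hwx | heq | hxw
    · 
      have e2 : E w x y := htrans w x y hwx hxy (Or.inr (Or.inr (Or.inr (Or.inr (Or.inr (⟨hw, m1, m2⟩))))))
      have e3 : E w x z := htrans w x z hwx (hxy.trans hyz) (Or.inr (Or.inr (Or.inr (Or.inr (Or.inr (⟨hw, m1, m3⟩))))))
      have H := hfree w hwP x hxP y hyP z hzP hwx hxy hyz
      exact H.2.1 ⟨e2, e3, hE⟩
    · 
      exact hw2 (heq ▸ m1)
    · rcases lt_trichotomy w y with hwy | heq | hyw
      · 
        have e2 : E x w y := htrans x w y hxw hwy (Or.inr (Or.inr (Or.inr (Or.inl ⟨m1, hw, m2⟩))))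
        have e3 : E x w z := htrans x w z hxw (hwy.trans hyz) (Or.inr (Or.inr (Or.inr (Or.inl ⟨m1, hw, m3⟩))))
        have H := hfree x hxP w hwP y hyP z hzP hxw hwy hyz
        exact H.1 ⟨e2, e3, hE⟩
      · 
        exact hw1 (heq ▸ m2)
      · rcases lt_trichotomy w z with hwz | heq | hzw
        · 
          have e2 : E x y w := htrans x y w hxy hyw (Or.inr (Or.inr (Or.inl ⟨m1, m2, hw⟩)))
          have e3 : E x w z := htrans x w z (hxy.trans hyw) hwz (Or.inr (Or.inr (Or.inr (Or.inl ⟨m1, hw, m3⟩))))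
          have H := hfree x hxP y hyP w hwP z hzP hxy hyw hwz
          exact H.1 ⟨e2, hE, e3⟩
        · 
          exact hw1 (heq ▸ m3)
        · 
          have e2 : E x y w := htrans x y w hxy (hyz.trans hzw) (Or.inr (Or.inr (Or.inl ⟨m1, m2, hw⟩)))
          have e3 : E x z w := htrans x z w (hxy.trans hyz) hzw (Or.inr (Or.inr (Or.inl ⟨m1, m3, hw⟩)))
          have H := hfree x hxP y hyP z hzP w hwP hxy hyz hzw
          exact H.1 ⟨hE, e2, e3⟩
  · -- pattern ('1', '2', '2')
    have hxP : x ∈ P := hP₁ m1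
    have hyP : y ∈ P := hP₂ m2
    have hzP : z ∈ P := hP₂ m3
    rcases lt_trichotomy w x with hwx | heq | hxw
    · 
      have e2 : E w x y := htrans w x y hwx hxy (Or.inr (Or.inr (Or.inr (Or.inr (Or.inl ⟨hw, m1, m2⟩)))))
      have e3 : E w x z := htrans w x z hwx (hxy.trans hyz) (Or.inr (Or.inr (Or.inr (Or.inr (Or.inl ⟨hw, m1, m3⟩)))))
      have H := hfree w hwP x hxP y hyP z hzP hwx hxy hyz
      exact H.2.1 ⟨e2, e3, hE⟩
    · 
      exact hw1 (heq ▸ m1)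
    · rcases lt_trichotomy w y with hwy | heq | hyw
      · 
        have e2 : E x w y := htrans x w y hxw hwy (Or.inr (Or.inl ⟨m1, hw, m2⟩))
        have e3 : E x w z := htrans x w z hxw (hwy.trans hyz) (Or.inr (Or.inl ⟨m1, hw, m3⟩))
        have H := hfree x hxP w hwP y hyP z hzP hxw hwy hyz
        exact H.1 ⟨e2, e3, hE⟩
      · 
        exact hw2 (heq ▸ m2)
      · rcases lt_trichotomy w z with hwz | heq | hzw
        · 
          have e2 : E x y w := htrans x y w hxy hyw (Or.inl ⟨m1, m2, hw⟩)
          have e3 : E x w z := htrans x w z (hxy.trans hyw) hwz (Or.inr (Or.inl ⟨m1, hw, m3⟩))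
          have H := hfree x hxP y hyP w hwP z hzP hxy hyw hwz
          exact H.1 ⟨e2, hE, e3⟩
        · 
          exact hw2 (heq ▸ m3)
        · 
          have e2 : E x y w := htrans x y w hxy (hyz.trans hzw) (Or.inl ⟨m1, m2, hw⟩)
          have e3 : E x z w := htrans x z w (hxy.trans hyz) hzw (Or.inl ⟨m1, m3, hw⟩)
          have H := hfree x hxP y hyP z hzP w hwP hxy hyz hzw
          exact H.1 ⟨hE, e2, e3⟩
  · -- pattern ('2', '1', '2')
    have hxP : x ∈ P := hP₂ m1
    have hyP : y ∈ P := hP₁ m2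
    have hzP : z ∈ P := hP₂ m3
    rcases lt_trichotomy w x with hwx | heq | hxw
    · 
      have e2 : E w x y := htrans w x y hwx hxy (Or.inr (Or.inr (Or.inr (Or.inr (Or.inr (⟨hw, m1, m2⟩))))))
      have e3 : E w y z := htrans w y z (hwx.trans hxy) hyz (Or.inr (Or.inr (Or.inr (Or.inr (Or.inl ⟨hw, m2, m3⟩)))))
      have H := hfree w hwP x hxP y hyP z hzP hwx hxy hyz
      exact H.2.2.1 ⟨e2, e3, hE⟩
    · 
      exact hw2 (heq ▸ m1)
    · rcases lt_trichotomy w y with hwy | heq | hyw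
      · 
        have e2 : E x w y := htrans x w y hxw hwy (Or.inr (Or.inr (Or.inr (Or.inl ⟨m1, hw, m2⟩))))
        have e3 : E w y z := htrans w y z hwy hyz (Or.inr (Or.inr (Or.inr (Or.inr (Or.inl ⟨hw, m2, m3⟩)))))
        have H := hfree x hxP w hwP y hyP z hzP hxw hwy hyz
        exact H.2.2.1 ⟨e2, hE, e3⟩
      · 
        exact hw1 (heq ▸ m2)
      · rcases lt_trichotomy w z with hwz | heq | hzw
        · 
          have e2 : E x y w := htrans x y w hxy hyw (Or.inr (Or.inr (Or.inl ⟨m1, m2, hw⟩)))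
          have e3 : E y w z := htrans y w z hyw hwz (Or.inr (Or.inl ⟨m2, hw, m3⟩))
          have H := hfree x hxP y hyP w hwP z hzP hxy hyw hwz
          exact H.2.1 ⟨e2, hE, e3⟩
        · 
          exact hw2 (heq ▸ m3)
        · 
          have e2 : E x y w := htrans x y w hxy (hyz.trans hzw) (Or.inr (Or.inr (Or.inl ⟨m1, m2, hw⟩)))
          have e3 : E y z w := htrans y z w hyz hzw (Or.inl ⟨m2, m3, hw⟩)
          have H := hfree x hxP y hyP z hzP w hwP hxy hyz hzw
          exact H.2.1 ⟨hE, e2, e3⟩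
  · -- pattern ('2', '2', '1')
    have hxP : x ∈ P := hP₂ m1
    have hyP : y ∈ P := hP₂ m2
    have hzP : z ∈ P := hP₁ m3
    rcases lt_trichotomy w x with hwx | heq | hxw
    · 
      have e2 : E w x z := htrans w x z hwx (hxy.trans hyz) (Or.inr (Or.inr (Or.inr (Or.inr (Or.inr (⟨hw, m1, m3⟩))))))
      have e3 : E w y z := htrans w y z (hwx.trans hxy) hyz (Or.inr (Or.inr (Or.inr (Or.inr (Or.inr (⟨hw, m2, m3⟩))))))
      have H := hfree w hwP x hxP y hyP z hzP hwx hxy hyz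
      exact H.2.2.2 ⟨e2, e3, hE⟩
    · 
      exact hw2 (heq ▸ m1)
    · rcases lt_trichotomy w y with hwy | heq | hyw
      · 
        have e2 : E x w z := htrans x w z hxw (hwy.trans hyz) (Or.inr (Or.inr (Or.inr (Or.inl ⟨m1, hw, m3⟩))))
        have e3 : E w y z := htrans w y z hwy hyz (Or.inr (Or.inr (Or.inr (Or.inr (Or.inr (⟨hw, m2, m3⟩))))))
        have H := hfree x hxP w hwP y hyP z hzP hxw hwy hyz
        exact H.2.2.2 ⟨e2, hE, e3⟩
      · 
        exact hw2 (heq ▸ m2)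
      · rcases lt_trichotomy w z with hwz | heq | hzw
        · 
          have e2 : E x w z := htrans x w z (hxy.trans hyw) hwz (Or.inr (Or.inr (Or.inr (Or.inl ⟨m1, hw, m3⟩))))
          have e3 : E y w z := htrans y w z hyw hwz (Or.inr (Or.inr (Or.inr (Or.inl ⟨m2, hw, m3⟩))))
          have H := hfree x hxP y hyP w hwP z hzP hxy hyw hwz
          exact H.2.2.2 ⟨hE, e2, e3⟩
        · 
          exact hw1 (heq ▸ m3)
        · 
          have e2 : E x z w := htrans x z w (hxy.trans hyz) hzw (Or.inr (Or.inr (Or.inl ⟨m1, m3, hw⟩)))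
          have e3 : E y z w := htrans y z w hyz hzw (Or.inr (Or.inr (Or.inl ⟨m2, m3, hw⟩)))
          have H := hfree x hxP y hyP z hzP w hwP hxy hyz hzw
          exact H.2.2.1 ⟨hE, e2, e3⟩
end

section
/- Let g be a real polynomial with g(a) ≠ 0 and g(b) ≠ 0 for a < b, and let g₀ = g, g₁ = g', g_i = -rem(g_{i-2}, g_{i-1}) be its Sturm sequence terminating at g_{t+1} = 0. Then the number of distinct real roots of g in the open interval (a, b) equals σ(a) - σ(b), where σ(ξ) is the number of sign changes (ignoring zeros) in the sequence g₀(ξ), g₁(ξ), ..., g_t(ξ). -/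
/-- The number of sign changes in a list of reals, ignoring zeros. -/
noncomputable def signChanges (l : List ℝ) : ℕ :=
  let l' := l.filter (fun x => decide (x ≠ 0))
  (l'.zip l'.tail).countP (fun q => decide (q.1 * q.2 < 0))

lemma signChanges_filter_eq {l m : List ℝ}
    (h : l.filter (fun x => decide (x ≠ 0)) = m.filter (fun x => decide (x ≠ 0))) :
    signChanges l = signChanges m := by
  unfold signChanges; rw [h]

lemma signChanges_nil : signChanges [] = 0 := rfl

lemma filter_ne_cons {x : ℝ} {l : List ℝ} (hx : x ≠ 0) :
    (x :: l).filter (fun x => decide (x ≠ 0)) = x :: l.filter (fun x => decide (x ≠ 0)) := by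
  simp [List.filter, hx]

lemma filter_zero_cons {l : List ℝ} :
    ((0:ℝ) :: l).filter (fun x => decide (x ≠ 0)) = l.filter (fun x => decide (x ≠ 0)) := by
  simp [List.filter]

lemma signChanges_zero_cons (l : List ℝ) : signChanges ((0:ℝ) :: l) = signChanges l :=
  signChanges_filter_eq filter_zero_cons

lemma signChanges_cons_cons {x y : ℝ} (hx : x ≠ 0) (hy : y ≠ 0) (l : List ℝ) :
    signChanges (x :: y :: l) = (if x * y < 0 then 1 else 0) + signChanges (y :: l) := by
  unfold signChanges
  rw [filter_ne_cons hx, filter_ne_cons hy]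
  simp only [List.tail_cons, List.zip_cons_cons, List.countP_cons]
  rcases l.filter (fun x => decide (x ≠ 0)) with _ | ⟨z, f⟩
  · simp only [List.zip_nil_right, List.zip_nil_left]
    split <;> simp_all [not_lt.2]
  · simp only [List.zip_cons_cons, List.countP_cons]
    split <;> simp_all <;> omega

lemma signChanges_cons_zero {x : ℝ} (l : List ℝ) :
    signChanges (x :: (0:ℝ) :: l) = signChanges (x :: l) := by
  apply signChanges_filter_eq
  by_cases hx : x = 0
  · subst hx; rw [filter_zero_cons, filter_zero_cons]
  · rw [filter_ne_cons hx, filter_zero_cons, filter_ne_cons hx]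

lemma signChanges_singleton (x : ℝ) : signChanges [x] = 0 := by
  by_cases hx : x = 0
  · subst hx; simp [signChanges, List.filter]
  · unfold signChanges; rw [filter_ne_cons hx]; rfl

/-- Relation between a list (possibly with zeros) and a nearby zero-free list:
heads have the same sign; a zero entry has anti-signed neighbors. -/
inductive SturmRel : List ℝ → List ℝ → Prop
  | nil : SturmRel [] []
  | single {x x'} : x * x' > 0 → SturmRel [x] [x']
  | cons {x x' y y' : ℝ} {l m : List ℝ} : x * x' > 0 → y ≠ 0 →
      SturmRel (y :: l) (y' :: m) → SturmRel (x :: y :: l) (x' :: y' :: m)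
  | zero {x x' y' z z' : ℝ} {l m : List ℝ} : x * x' > 0 → y' ≠ 0 → x * z < 0 →
      SturmRel (z :: l) (z' :: m) → SturmRel (x :: 0 :: z :: l) (x' :: y' :: z' :: m)

lemma SturmRel.head_sign {x x' : ℝ} {l m : List ℝ} (h : SturmRel (x :: l) (x' :: m)) :
    x * x' > 0 := by
  cases h <;> assumption

lemma SturmRel.signChanges_eq {l m : List ℝ} (h : SturmRel l m) :
    signChanges l = signChanges m := by
  induction h with
  | nil => rfl
  | single _ => simp [signChanges_singleton]
  | cons hx hy hrel ih =>
    rename_i x x' y y' l m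
    have hy' : y' ≠ 0 := by
      have := hrel.head_sign
      intro h0; rw [h0, mul_zero] at this; exact lt_irrefl 0 this
    have hx0 : x ≠ 0 := by intro h0; rw [h0, zero_mul] at hx; exact lt_irrefl 0 hx
    have hx'0 : x' ≠ 0 := by intro h0; rw [h0, mul_zero] at hx; exact lt_irrefl 0 hx
    rw [signChanges_cons_cons hx0 hy, signChanges_cons_cons hx'0 hy', ih]
    congr 1
    have : (x * y < 0) ↔ (x' * y' < 0) := by
      constructor <;> intro hlt <;> nlinarith [hrel.head_sign]
    simp [this]
  | zero hx hy' hxz hrel ih =>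
    rename_i x x' y' z z' l m
    have hz : z ≠ 0 := by intro h0; rw [h0, mul_zero] at hxz; exact absurd hx (by nlinarith)
    have hz0 : z * z' > 0 := hrel.head_sign
    have hz' : z' ≠ 0 := by intro h0; rw [h0, mul_zero] at hz0; exact lt_irrefl 0 hz0
    have hx0 : x ≠ 0 := by intro h0; rw [h0, zero_mul] at hx; exact lt_irrefl 0 hx
    have hx'0 : x' ≠ 0 := by intro h0; rw [h0, mul_zero] at hx; exact lt_irrefl 0 hx
    rw [signChanges_cons_zero, signChanges_cons_cons hx0 hz,
      signChanges_cons_cons hx'0 hy', signChanges_cons_cons hy' hz', ih]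
    have hxz' : x' * z' < 0 := by nlinarith
    have : (if x * z < 0 then (1:ℕ) else 0) = 1 := by simp [hxz]
    rw [this]
    rcases lt_trichotomy (x' * y') 0 with h1 | h1 | h1
    · have h2 : ¬ (y' * z' < 0) := by
        intro h3
        have hp : (x' * y') * (y' * z') > 0 := mul_pos_of_neg_of_neg h1 h3
        nlinarith [sq_nonneg y']
      simp [h1, h2]
    · exact (mul_ne_zero hx'0 hy' h1).elim
    · have h2 : y' * z' < 0 := by
        rcases lt_trichotomy (y' * z') 0 with h3 | h3 | h3
        · exact h3
        · exact (mul_ne_zero hy' hz' h3).elim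
        · have hp : (x' * y') * (y' * z') > 0 := mul_pos h1 h3
          nlinarith [sq_nonneg y']
      simp [not_lt.2 h1.le, h2]

lemma range_succ_map_cons (f : ℕ → ℝ) (n : ℕ) :
    (List.range (n + 1)).map f = f 0 :: (List.range n).map (fun i => f (i + 1)) := by
  rw [List.range_succ_eq_map, List.map_cons, List.map_map]
  rfl

/-- Build `SturmRel` between two indexed sequences. -/
lemma sturmRel_build : ∀ (t : ℕ) (f f' : ℕ → ℝ),
    f 0 ≠ 0 → f t ≠ 0 →
    (∀ i ≤ t, f' i ≠ 0) →
    (∀ i ≤ t, f i ≠ 0 → f i * f' i > 0) →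
    (∀ i ≤ t, f i = 0 → 1 ≤ i ∧ i < t ∧ f (i - 1) * f (i + 1) < 0) →
    SturmRel ((List.range (t + 1)).map f) ((List.range (t + 1)).map f') := by
  intro t
  induction t using Nat.strong_induction_on with
  | _ t ih =>
    intro f f' h0 hlast hnz' hsign hzero
    match t with
    | 0 =>
      rw [range_succ_map_cons f, range_succ_map_cons f']
      simp only [List.range_zero, List.map_nil]
      exact SturmRel.single (hsign 0 le_rfl h0)
    | (n+1) =>
      by_cases h1 : f 1 = 0
      · -- zero at position 1
        obtain ⟨-, hlt, hprod⟩ := hzero 1 (by omega) h1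
        have hprod' : f 0 * f 2 < 0 := hprod
        have hf2 : f 2 ≠ 0 := by
          intro hc; rw [hc, mul_zero] at hprod'; exact lt_irrefl 0 hprod'
        obtain ⟨m, rfl⟩ : ∃ m, n = m + 1 := ⟨n - 1, by omega⟩
        · 
          have hrel : SturmRel ((List.range (m + 1)).map (fun i => f (i + 2)))
              ((List.range (m + 1)).map (fun i => f' (i + 2))) := by
            apply ih m (by omega)
            · exact hf2
            · exact hlast
            · intro i hi; exact hnz' (i+2) (by omega)
            · intro i hi hne; exact hsign (i+2) (by omega) hne
            · intro i hi hz
              obtain ⟨hi1, hi2, hp⟩ := hzero (i+2) (by omega) hz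
              have hi1' : 1 ≤ i := by
                by_contra hcon
                have hi0 : i = 0 := by omega
                subst hi0
                have h13 : f 1 * f 3 < 0 := hp
                rw [h1, zero_mul] at h13; exact lt_irrefl 0 h13
              refine ⟨hi1', by omega, ?_⟩
              · have he : i + 2 - 1 = (i - 1) + 2 := by omega
                rw [he] at hp
                have he2 : i + 2 + 1 = (i + 1) + 2 := by omega
                rw [he2] at hp
                exact hp
          rw [range_succ_map_cons f, range_succ_map_cons f',
            range_succ_map_cons (fun i => f (i+1)), range_succ_map_cons (fun i => f' (i+1)),
            range_succ_map_cons (fun i => f (i+1+1)), range_succ_map_cons (fun i => f' (i+1+1))]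
          rw [range_succ_map_cons (fun i => f (i+2)), range_succ_map_cons (fun i => f' (i+2))] at hrel
          rw [h1]
          exact SturmRel.zero (hsign 0 (by omega) h0) (hnz' 1 (by omega)) hprod' hrel
      · -- f 1 ≠ 0
        have hrel : SturmRel ((List.range (n + 1)).map (fun i => f (i + 1)))
            ((List.range (n + 1)).map (fun i => f' (i + 1))) := by
          apply ih n (by omega)
          · exact h1
          · exact hlast
          · intro i hi; exact hnz' (i+1) (by omega)
          · intro i hi hne; exact hsign (i+1) (by omega) hne
          · intro i hi hz
            obtain ⟨hi1, hi2, hp⟩ := hzero (i+1) (by omega) hz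
            have hi1' : 1 ≤ i := by
              by_contra hcon
              have : i = 0 := by omega
              subst this; exact h1 hz
            refine ⟨hi1', by omega, ?_⟩
            have he : i + 1 - 1 = (i - 1) + 1 := by omega
            rw [he] at hp
            exact hp
        rw [range_succ_map_cons f, range_succ_map_cons f']
        rw [range_succ_map_cons (fun i => f (i+1)), range_succ_map_cons (fun i => f' (i+1))] at hrel ⊢
        exact SturmRel.cons (hsign 0 (by omega) h0) h1 hrel

open Polynomial

/-- If a polynomial has no zeros on `[u,v]`, its values at `u` and `v` have the same sign. -/
lemma poly_sign_const (q : Polynomial ℝ) {u v : ℝ} (huv : u ≤ v)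
    (h : ∀ x ∈ Set.Icc u v, q.eval x ≠ 0) : q.eval u * q.eval v > 0 := by
  have hu := h u (by constructor <;> simp [huv, le_refl])
  have hv := h v (by constructor <;> simp [huv, le_refl])
  rcases lt_or_gt_of_ne hu with hu' | hu' <;> rcases lt_or_gt_of_ne hv with hv' | hv'
  · exact mul_pos_of_neg_of_neg hu' hv'
  · -- eval u < 0 < eval v : root in between
    exfalso
    have hcont : ContinuousOn (fun x => q.eval x) (Set.Icc u v) :=
      (Polynomial.continuous q).continuousOn
    have := intermediate_value_Icc huv hcont (a := u) (b := v)
    have h0 : (0:ℝ) ∈ Set.Icc (q.eval u) (q.eval v) := ⟨hu'.le, hv'.le⟩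
    obtain ⟨x, hx, hx0⟩ := this h0
    exact h x hx hx0
  · exfalso
    have hcont : ContinuousOn (fun x => q.eval x) (Set.Icc u v) :=
      (Polynomial.continuous q).continuousOn
    have := intermediate_value_Icc' huv hcont (a := u) (b := v)
    have h0 : (0:ℝ) ∈ Set.Icc (q.eval v) (q.eval u) := ⟨hv'.le, hu'.le⟩
    obtain ⟨x, hx, hx0⟩ := this h0
    exact h x hx hx0
  · exact mul_pos hu' hv'

/-- A nonzero polynomial has a punctured root-free window around any point. -/
lemma poly_window (q : Polynomial ℝ) (hq : q ≠ 0) (c : ℝ) :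
    ∃ ε > 0, ∀ x, |x - c| < ε → x ≠ c → q.eval x ≠ 0 := by
  classical
  set S := q.roots.toFinset.filter (fun r => r ≠ c) with hS
  by_cases hSe : S.Nonempty
  · refine ⟨S.inf' hSe (fun r => |r - c|), ?_, ?_⟩
    · rw [gt_iff_lt, Finset.lt_inf'_iff]
      intro r hr
      have : r ≠ c := (Finset.mem_filter.mp hr).2
      simpa [abs_pos, sub_ne_zero] using this
    · intro x hx hxc h0
      have hmem : x ∈ S := by
        rw [hS, Finset.mem_filter, Multiset.mem_toFinset, mem_roots hq]
        exact ⟨h0, hxc⟩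
      have := Finset.inf'_le (fun r => |r - c|) hmem
      linarith
  · refine ⟨1, one_pos, ?_⟩
    intro x hx hxc h0
    exact hSe ⟨x, by rw [hS, Finset.mem_filter, Multiset.mem_toFinset, mem_roots hq]; exact ⟨h0, hxc⟩⟩

/-- values of a polynomial with no zeros on `(u,v]` share the sign of the right endpoint. -/
lemma poly_sign_Ioc (q : Polynomial ℝ) {u v : ℝ}
    (h : ∀ x ∈ Set.Ioc u v, q.eval x ≠ 0) :
    ∀ x ∈ Set.Ioc u v, q.eval x * q.eval v > 0 := by
  intro x hx
  apply poly_sign_const q hx.2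
  intro z hz
  exact h z ⟨lt_of_lt_of_le hx.1 hz.1, hz.2⟩

lemma poly_sign_Ico (q : Polynomial ℝ) {u v : ℝ}
    (h : ∀ x ∈ Set.Ico u v, q.eval x ≠ 0) :
    ∀ x ∈ Set.Ico u v, q.eval u * q.eval x > 0 := by
  intro x hx
  apply poly_sign_const q hx.1
  intro z hz
  exact h z ⟨hz.1, lt_of_le_of_lt hz.2 hx.2⟩

lemma deriv_sq_eval (p : Polynomial ℝ) (y : ℝ) :
    deriv (fun z => (p ^ 2).eval z) y = 2 * (p.eval y * (Polynomial.derivative p).eval y) := by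
  rw [Polynomial.deriv, Polynomial.derivative_pow]
  simp [Polynomial.eval_mul]
  ring

/-- Local sign of `p * p'` near a root `c` of `p`: negative to the left, positive to the right. -/
lemma pp'_local_sign (p : Polynomial ℝ) (hp : p ≠ 0) {c : ℝ} (hc : p.eval c = 0) :
    ∃ ε > 0, ∀ x, |x - c| < ε → x ≠ c →
      (c < x → p.eval x * (Polynomial.derivative p).eval x > 0) ∧
      (x < c → p.eval x * (Polynomial.derivative p).eval x < 0) := by
  classical
  have hp' : Polynomial.derivative p ≠ 0 := by
    intro h
    have hC := Polynomial.eq_C_of_derivative_eq_zero h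
    rw [hC] at hc hp
    simp at hc
    rw [hc] at hp
    simp at hp
  have hpp' : p * Polynomial.derivative p ≠ 0 := mul_ne_zero hp hp'
  obtain ⟨ε, hε, hwin⟩ := poly_window (p * Polynomial.derivative p) hpp' c
  refine ⟨ε, hε, ?_⟩
  intro x hx hxc
  have habs := abs_sub_lt_iff.mp hx
  have hnex : (p * Polynomial.derivative p).eval x ≠ 0 := hwin x hx hxc
  constructor
  · intro hcx
    by_contra hcon
    push_neg at hcon
    have hneg : (p * Polynomial.derivative p).eval x < 0 := by
      rw [Polynomial.eval_mul] at hnex ⊢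
      exact lt_of_le_of_ne (by simpa using hcon) hnex
    -- pp' < 0 on (c, x]
    have hall : ∀ y ∈ Set.Ioc c x, (p * Polynomial.derivative p).eval y ≠ 0 := by
      intro y hy
      apply hwin y _ (ne_of_gt hy.1)
      rw [abs_sub_lt_iff]
      constructor <;> [linarith [hy.2, habs.1]; linarith [hy.1]]
    have hsgn := poly_sign_Ioc _ hall
    have hanti : StrictAntiOn (fun z => (p ^ 2).eval z) (Set.Icc c x) := by
      apply strictAntiOn_of_deriv_neg (convex_Icc c x)
        ((Polynomial.continuous _).continuousOn)
      intro y hy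
      rw [interior_Icc] at hy
      rw [deriv_sq_eval]
      have h1 := hsgn y ⟨hy.1, hy.2.le⟩
      have h2 : (p * Polynomial.derivative p).eval y < 0 := by nlinarith
      rw [Polynomial.eval_mul] at h2
      linarith
    have h3 := hanti (Set.left_mem_Icc.mpr hcx.le) (Set.right_mem_Icc.mpr hcx.le) hcx
    simp only [Polynomial.eval_pow] at h3
    rw [hc] at h3
    nlinarith [sq_nonneg (p.eval x)]
  · intro hxc
    by_contra hcon
    push_neg at hcon
    have hpos : (p * Polynomial.derivative p).eval x > 0 := by
      rw [Polynomial.eval_mul] at hnex ⊢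
      exact lt_of_le_of_ne (by simpa using hcon) (Ne.symm hnex)
    -- pp' > 0 on [x, c)
    have hall : ∀ y ∈ Set.Ico x c, (p * Polynomial.derivative p).eval y ≠ 0 := by
      intro y hy
      apply hwin y _ (ne_of_lt hy.2)
      rw [abs_sub_lt_iff]
      constructor <;> [linarith [hy.2]; linarith [hy.1, habs.2]]
    have hsgn := poly_sign_Ico _ hall
    have hmono : StrictMonoOn (fun z => (p ^ 2).eval z) (Set.Icc x c) := by
      apply strictMonoOn_of_deriv_pos (convex_Icc x c)
        ((Polynomial.continuous _).continuousOn)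
      intro y hy
      rw [interior_Icc] at hy
      rw [deriv_sq_eval]
      have h1 := hsgn y ⟨hy.1.le, hy.2⟩
      have h2 : (p * Polynomial.derivative p).eval y > 0 := by nlinarith
      rw [Polynomial.eval_mul] at h2
      linarith
    have h3 := hmono (Set.left_mem_Icc.mpr hxc.le) (Set.right_mem_Icc.mpr hxc.le) hxc
    simp only [Polynomial.eval_pow] at h3
    rw [hc] at h3
    nlinarith [sq_nonneg (p.eval x)]
lemma signChanges_smul {k : ℝ} (hk : k ≠ 0) (l : List ℝ) :
    signChanges (l.map (fun x => k * x)) = signChanges l := by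
  unfold signChanges
  have hfil : (l.map (fun x => k * x)).filter (fun x => decide (x ≠ 0))
      = (l.filter (fun x => decide (x ≠ 0))).map (fun x => k * x) := by
    rw [List.filter_map]
    congr 1
    apply List.filter_congr
    intro x _
    simp [hk]
  rw [hfil]
  set F := l.filter (fun x => decide (x ≠ 0))
  simp only
  rw [← List.map_tail, List.zip_map, List.countP_map]
  congr 1
  funext q
  rcases q with ⟨x, y⟩
  simp only [Function.comp, Prod.map_apply, decide_eq_decide]
  constructor <;> intro h <;> nlinarith [sq_nonneg k, mul_self_pos.mpr hk]

/-- `sturmSigma g t ξ` is the number of sign changes (ignoring zeros) in the sequence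
`g 0 ξ, g 1 ξ, ..., g t ξ`. -/
noncomputable def sturmSigma (g : ℕ → Polynomial ℝ) (t : ℕ) (ξ : ℝ) : ℕ :=
  signChanges ((List.range (t + 1)).map (fun i => (g i).eval ξ))

section Chain

variable (h : ℕ → Polynomial ℝ) (t : ℕ)

def ChainHyp : Prop :=
  h t = 1 ∧ (∀ i ≤ t, h i ≠ 0) ∧
  (∀ i c, 1 ≤ i → i ≤ t → (h i).eval c = 0 →
    i < t ∧ (h (i-1)).eval c * (h (i+1)).eval c < 0) ∧
  (∀ c : ℝ, (h 0).eval c = 0 → (h 1).eval c ≠ 0 ∧ ∃ ε > 0, ∀ x, |x - c| < ε → x ≠ c →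
    (c < x → (h 0).eval x * (h 1).eval x > 0) ∧ (x < c → (h 0).eval x * (h 1).eval x < 0))

lemma chain_eval_ne_zero {h t} (hc : ChainHyp h t) {x : ℝ}
    (hx : (∏ i ∈ Finset.range (t+1), h i).eval x ≠ 0) :
    ∀ i ≤ t, (h i).eval x ≠ 0 := by
  intro i hi h0
  apply hx
  rw [Polynomial.eval_prod]
  exact Finset.prod_eq_zero (Finset.mem_range.mpr (by omega)) h0

lemma chain_local {h t} (hc : ChainHyp h t) (c : ℝ) :
    ∃ ε > 0, ∀ ξ, ξ ≠ c → |ξ - c| < ε →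
      (c < ξ → sturmSigma h t ξ = sturmSigma h t c) ∧
      (ξ < c → sturmSigma h t ξ = sturmSigma h t c + (if (h 0).eval c = 0 then 1 else 0)) := by
  classical
  obtain ⟨hA, hB, hC, hD⟩ := hc
  have hHne : (∏ i ∈ Finset.range (t+1), h i) ≠ 0 := by
    rw [Finset.prod_ne_zero_iff]
    intro i hi
    exact hB i (by simpa [Nat.lt_succ_iff] using hi)
  obtain ⟨ε₁, hε₁, hwin⟩ := poly_window _ hHne c
  have hwin' : ∀ x, |x - c| < ε₁ → x ≠ c → ∀ i ≤ t, (h i).eval x ≠ 0 := by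
    intro x hx hxc
    exact chain_eval_ne_zero ⟨hA, hB, hC, hD⟩ (hwin x hx hxc)
  by_cases h0c : (h 0).eval c = 0
  · obtain ⟨h1c, ε₂, hε₂, hsgn⟩ := hD c h0c
    refine ⟨min ε₁ ε₂, lt_min hε₁ hε₂, ?_⟩
    intro ξ hξc hξ
    have hξ1 : |ξ - c| < ε₁ := lt_of_lt_of_le hξ (min_le_left _ _)
    have hξ2 : |ξ - c| < ε₂ := lt_of_lt_of_le hξ (min_le_right _ _)
    have hnzξ : ∀ i ≤ t, (h i).eval ξ ≠ 0 := hwin' ξ hξ1 hξc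
    -- sign persistence for nonvanishing entries
    have hsign : ∀ i ≤ t, (h i).eval c ≠ 0 → (h i).eval c * (h i).eval ξ > 0 := by
      intro i hi hic
      have hnz : ∀ y, y ∈ Set.Icc (min c ξ) (max c ξ) → (h i).eval y ≠ 0 := by
        intro y hy
        by_cases hyc : y = c
        · rwa [hyc]
        · apply hwin' y _ hyc i hi
          rcases hy with ⟨hy1, hy2⟩
          rcases abs_sub_lt_iff.mp hξ1 with ⟨ha1, ha2⟩
          rw [abs_sub_lt_iff]
          rcases le_total c ξ with hcle | hcle <;>
            simp [min_eq_left, min_eq_right, max_eq_left, max_eq_right, hcle] at hy1 hy2 <;>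
            constructor <;> linarith
      rcases le_total c ξ with hcle | hcle
      · have := poly_sign_const (h i) hcle (by
          intro z hz; exact hnz z ⟨by simp [min_le_iff]; left; exact hz.1, by simp [le_max_iff]; right; exact hz.2⟩)
        exact this
      · have := poly_sign_const (h i) hcle (by
          intro z hz; exact hnz z ⟨by simp [min_le_iff]; right; exact hz.1, by simp [le_max_iff]; left; exact hz.2⟩)
        nlinarith
    -- t = s + 1
    have htpos : t ≠ 0 := by
      intro h0
      have hA' := hA
      rw [h0] at hA'
      rw [hA'] at h0c
      simp at h0c
    obtain ⟨s, rfl⟩ : ∃ s, t = s + 1 := ⟨t - 1, by omega⟩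
    have hrel : SturmRel ((List.range (s + 1)).map (fun j => (h (j+1)).eval c))
        ((List.range (s + 1)).map (fun j => (h (j+1)).eval ξ)) := by
      apply sturmRel_build
      · exact h1c
      · simp [hA]
      · intro j hj; exact hnzξ (j+1) (by omega)
      · intro j hj hne; exact hsign (j+1) (by omega) hne
      · intro j hj hz
        obtain ⟨hlt, hprod⟩ := hC (j+1) c (by omega) (by omega) hz
        have hj1 : 1 ≤ j := by
          by_contra hcon
          have : j = 0 := by omega
          subst this; exact h1c hz
        refine ⟨hj1, by omega, ?_⟩
        have e1 : j + 1 - 1 = (j - 1) + 1 := by omega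
        have e2 : j + 1 + 1 = (j + 1) + 1 := rfl
        rw [e1] at hprod
        exact hprod
    have hσc : sturmSigma h (s+1) c = signChanges ((List.range (s + 1)).map (fun j => (h (j+1)).eval c)) := by
      unfold sturmSigma
      rw [range_succ_map_cons, h0c, signChanges_zero_cons]
    have hσξ : sturmSigma h (s+1) ξ =
        (if (h 0).eval ξ * (h 1).eval ξ < 0 then 1 else 0)
          + signChanges ((List.range (s + 1)).map (fun j => (h (j+1)).eval ξ)) := by
      unfold sturmSigma
      rw [range_succ_map_cons (fun i => (h i).eval ξ) (s+1),
        range_succ_map_cons (fun j => (h (j+1)).eval ξ) s]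
      rw [signChanges_cons_cons (hnzξ 0 (by omega)) (hnzξ 1 (by omega))]
    constructor
    · intro hlt
      have hp := (hsgn ξ hξ2 hξc).1 hlt
      rw [hσξ, hσc, hrel.signChanges_eq, if_neg (by push_neg; nlinarith)]
      omega
    · intro hlt
      have hp := (hsgn ξ hξ2 hξc).2 hlt
      rw [hσξ, hσc, hrel.signChanges_eq, if_pos hp, if_pos h0c]
      omega
  · refine ⟨ε₁, hε₁, ?_⟩
    intro ξ hξc hξ
    have hnzξ : ∀ i ≤ t, (h i).eval ξ ≠ 0 := hwin' ξ hξ hξc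
    have hsign : ∀ i ≤ t, (h i).eval c ≠ 0 → (h i).eval c * (h i).eval ξ > 0 := by
      intro i hi hic
      have hnz : ∀ y, y ∈ Set.Icc (min c ξ) (max c ξ) → (h i).eval y ≠ 0 := by
        intro y hy
        by_cases hyc : y = c
        · rwa [hyc]
        · apply hwin' y _ hyc i hi
          rcases hy with ⟨hy1, hy2⟩
          rcases abs_sub_lt_iff.mp hξ with ⟨ha1, ha2⟩
          rw [abs_sub_lt_iff]
          rcases le_total c ξ with hcle | hcle <;>
            simp [min_eq_left, min_eq_right, max_eq_left, max_eq_right, hcle] at hy1 hy2 <;>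
            constructor <;> linarith
      rcases le_total c ξ with hcle | hcle
      · have := poly_sign_const (h i) hcle (by
          intro z hz; exact hnz z ⟨by simp [min_le_iff]; left; exact hz.1, by simp [le_max_iff]; right; exact hz.2⟩)
        exact this
      · have := poly_sign_const (h i) hcle (by
          intro z hz; exact hnz z ⟨by simp [min_le_iff]; right; exact hz.1, by simp [le_max_iff]; left; exact hz.2⟩)
        nlinarith
    have hrel : SturmRel ((List.range (t + 1)).map (fun i => (h i).eval c))
        ((List.range (t + 1)).map (fun i => (h i).eval ξ)) := by
      apply sturmRel_build
      · exact h0c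
      · simp [hA]
      · intro i hi; exact hnzξ i hi
      · intro i hi hne; exact hsign i hi hne
      · intro i hi hz
        have hi1 : 1 ≤ i := by
          by_contra hcon
          have : i = 0 := by omega
          subst this; exact h0c hz
        obtain ⟨hlt, hprod⟩ := hC i c hi1 hi hz
        exact ⟨hi1, hlt, hprod⟩
    have heq : sturmSigma h t ξ = sturmSigma h t c := hrel.signChanges_eq.symm
    exact ⟨fun _ => heq, fun _ => by simp [heq, h0c]⟩

lemma chain_const {h t} (hc : ChainHyp h t) {u v : ℝ}
    (hroot : ∀ x, u < x → x < v → ∀ i ≤ t, (h i).eval x ≠ 0) :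
    ∀ ξ ξ', u < ξ → ξ ≤ ξ' → ξ' < v → sturmSigma h t ξ = sturmSigma h t ξ' := by
  obtain ⟨hA, hB, hC, hD⟩ := hc
  intro ξ ξ' h1 h2 h3
  rcases eq_or_lt_of_le h2 with rfl | h2
  · rfl
  have hrel : SturmRel ((List.range (t + 1)).map (fun i => (h i).eval ξ))
      ((List.range (t + 1)).map (fun i => (h i).eval ξ')) := by
    apply sturmRel_build
    · exact hroot ξ h1 (lt_trans h2 h3) 0 (by omega)
    · exact hroot ξ h1 (lt_trans h2 h3) t le_rfl
    · intro i hi; exact hroot ξ' (lt_trans h1 h2) h3 i hi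
    · intro i hi hne
      exact poly_sign_const (h i) h2.le (fun z hz =>
        hroot z (lt_of_lt_of_le h1 hz.1) (lt_of_le_of_lt hz.2 h3) i hi)
    · intro i hi hz
      exact absurd hz (hroot ξ h1 (lt_trans h2 h3) i hi)
  exact hrel.signChanges_eq

end Chain

open Polynomial in
lemma chain_global {h : ℕ → Polynomial ℝ} {t : ℕ} (hc : ChainHyp h t) :
    ∀ N : ℕ, ∀ u v : ℝ, u < v → (h 0).eval v ≠ 0 →
      (((∏ i ∈ Finset.range (t+1), h i).roots.toFinset.filter
          (fun x => u < x ∧ x < v)).card ≤ N) →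
      sturmSigma h t u = sturmSigma h t v +
        ((h 0).roots.toFinset.filter (fun x => u < x ∧ x < v)).card := by
  classical
  obtain ⟨hA, hB, hC, hD⟩ := hc
  have hc' : ChainHyp h t := ⟨hA, hB, hC, hD⟩
  have hHne : (∏ i ∈ Finset.range (t+1), h i) ≠ 0 := by
    rw [Finset.prod_ne_zero_iff]
    intro i hi
    exact hB i (by simpa [Nat.lt_succ_iff] using hi)
  have h0ne : h 0 ≠ 0 := hB 0 (by omega)
  have hmemH : ∀ x : ℝ, ∀ i ≤ t, (h i).eval x = 0 →
      x ∈ (∏ i ∈ Finset.range (t+1), h i).roots.toFinset := by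
    intro x i hi hx
    rw [Multiset.mem_toFinset, mem_roots hHne]
    show (∏ i ∈ Finset.range (t+1), h i).eval x = 0
    rw [Polynomial.eval_prod]
    exact Finset.prod_eq_zero (Finset.mem_range.mpr (by omega)) hx
  intro N
  induction N using Nat.strong_induction_on with
  | _ N ih =>
    intro u v huv hv hcard
    set R := (∏ i ∈ Finset.range (t+1), h i).roots.toFinset.filter
      (fun x => u < x ∧ x < v) with hR
    by_cases hRe : R.Nonempty
    · -- there is a root of some h i in (u, v); take the least one
      set r := R.min' hRe with hrdef
      have hrR : r ∈ R := R.min'_mem hRe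
      obtain ⟨-, hur, hrv⟩ := Finset.mem_filter.mp hrR
      have hnoroot_ur : ∀ x, u < x → x < r → ∀ i ≤ t, (h i).eval x ≠ 0 := by
        intro x hx1 hx2 i hi hx0
        have hxR : x ∈ R := Finset.mem_filter.mpr ⟨hmemH x i hi hx0, hx1, lt_trans hx2 hrv⟩
        have := R.min'_le x hxR
        rw [← hrdef] at this
        linarith
      -- σ u = σ r + indicator
      obtain ⟨εu, hεu, hu⟩ := chain_local hc' u
      obtain ⟨εr, hεr, hr⟩ := chain_local hc' r
      set ξ₁ := u + (min εu (r-u))/4 with hξ₁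
      set ξ₂ := r - (min εr (r-u))/4 with hξ₂
      have hmu : 0 < min εu (r-u) := lt_min hεu (by linarith)
      have hmr : 0 < min εr (r-u) := lt_min hεr (by linarith)
      have hmu1 : min εu (r-u) ≤ εu := min_le_left _ _
      have hmu2 : min εu (r-u) ≤ r-u := min_le_right _ _
      have hmr1 : min εr (r-u) ≤ εr := min_le_left _ _
      have hmr2 : min εr (r-u) ≤ r-u := min_le_right _ _
      have huξ₁ : u < ξ₁ := by rw [hξ₁]; linarith
      have hξ₂r : ξ₂ < r := by rw [hξ₂]; linarith
      have hξ₁₂ : ξ₁ ≤ ξ₂ := by rw [hξ₁, hξ₂]; linarith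
      have h1 : sturmSigma h t ξ₁ = sturmSigma h t u :=
        (hu ξ₁ (by linarith) (by rw [hξ₁, abs_of_pos (by linarith)]; linarith)).1 huξ₁
      have h2 : sturmSigma h t ξ₂ = sturmSigma h t r
          + (if (h 0).eval r = 0 then 1 else 0) :=
        (hr ξ₂ (by linarith) (by rw [hξ₂, abs_of_nonpos (by linarith)]; linarith)).2 hξ₂r
      have h3 : sturmSigma h t ξ₁ = sturmSigma h t ξ₂ :=
        chain_const hc' hnoroot_ur ξ₁ ξ₂ huξ₁ hξ₁₂ hξ₂r
      -- induction on (r, v)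
      set R' := (∏ i ∈ Finset.range (t+1), h i).roots.toFinset.filter
        (fun x => r < x ∧ x < v) with hR'
      have hsub : R' ⊆ R.erase r := by
        intro x hx
        obtain ⟨hx1, hx2, hx3⟩ := Finset.mem_filter.mp hx
        exact Finset.mem_erase.mpr ⟨ne_of_gt hx2,
          Finset.mem_filter.mpr ⟨hx1, lt_trans hur hx2, hx3⟩⟩
      have hcard' : R'.card < N := by
        have hle := Finset.card_le_card hsub
        have := Finset.card_erase_of_mem hrR
        have hRpos : 1 ≤ R.card := Finset.card_pos.mpr hRe
        omega
      have h4 := ih R'.card hcard' r v hrv hv le_rfl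
      -- assemble the root counts
      set A := (h 0).roots.toFinset.filter (fun x => u < x ∧ x < v) with hAdef
      set B := (h 0).roots.toFinset.filter (fun x => r < x ∧ x < v) with hBdef
      have hge : ∀ x ∈ A, r ≤ x := by
        intro x hx
        obtain ⟨hx1, hx2, hx3⟩ := Finset.mem_filter.mp hx
        by_contra hcon
        push_neg at hcon
        have hroot : (h 0).eval x = 0 := by
          have := Multiset.mem_toFinset.mp hx1
          exact (mem_roots h0ne).mp this
        exact hnoroot_ur x hx2 hcon 0 (by omega) hroot
      have hcardA : A.card = B.card + (if (h 0).eval r = 0 then 1 else 0) := by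
        by_cases hr0 : (h 0).eval r = 0
        · rw [if_pos hr0]
          have hAeq : A = insert r B := by
            ext x
            constructor
            · intro hx
              obtain ⟨hx1, hx2, hx3⟩ := Finset.mem_filter.mp hx
              rcases eq_or_lt_of_le (hge x hx) with rfl | hlt
              · exact Finset.mem_insert_self _ _
              · exact Finset.mem_insert_of_mem (Finset.mem_filter.mpr ⟨hx1, hlt, hx3⟩)
            · intro hx
              rcases Finset.mem_insert.mp hx with rfl | hx
              · refine Finset.mem_filter.mpr ⟨?_, hur, hrv⟩
                rw [Multiset.mem_toFinset, mem_roots h0ne]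
                exact hr0
              · obtain ⟨hx1, hx2, hx3⟩ := Finset.mem_filter.mp hx
                exact Finset.mem_filter.mpr ⟨hx1, lt_trans hur hx2, hx3⟩
          rw [hAeq, Finset.card_insert_of_notMem]
          intro hcon
          exact absurd (Finset.mem_filter.mp hcon).2.1 (lt_irrefl r)
        · rw [if_neg hr0]
          have hAeq : A = B := by
            ext x
            constructor
            · intro hx
              obtain ⟨hx1, hx2, hx3⟩ := Finset.mem_filter.mp hx
              have hlt : r < x := by
                rcases eq_or_lt_of_le (hge x hx) with rfl | hlt
                · exfalso
                  apply hr0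
                  have := Multiset.mem_toFinset.mp hx1
                  exact (mem_roots h0ne).mp this
                · exact hlt
              exact Finset.mem_filter.mpr ⟨hx1, hlt, hx3⟩
            · intro hx
              obtain ⟨hx1, hx2, hx3⟩ := Finset.mem_filter.mp hx
              exact Finset.mem_filter.mpr ⟨hx1, lt_trans hur hx2, hx3⟩
          rw [hAeq]
          omega

      rw [hcardA, ← h1, h3, h2, h4]
      ring
    · -- no roots in (u, v)
      have hRempty : R = ∅ := Finset.not_nonempty_iff_eq_empty.mp hRe
      have hnoroot : ∀ x, u < x → x < v → ∀ i ≤ t, (h i).eval x ≠ 0 := by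
        intro x hx1 hx2 i hi hx0
        have hxR : x ∈ R := Finset.mem_filter.mpr ⟨hmemH x i hi hx0, hx1, hx2⟩
        rw [hRempty] at hxR
        exact absurd hxR (Finset.notMem_empty x)
      obtain ⟨εu, hεu, hu⟩ := chain_local hc' u
      obtain ⟨εv, hεv, hvl⟩ := chain_local hc' v
      set ξ₁ := u + (min εu (v-u))/4 with hξ₁
      set ξ₂ := v - (min εv (v-u))/4 with hξ₂
      have hmu : 0 < min εu (v-u) := lt_min hεu (by linarith)
      have hmv : 0 < min εv (v-u) := lt_min hεv (by linarith)
      have hmu1 : min εu (v-u) ≤ εu := min_le_left _ _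
      have hmu2 : min εu (v-u) ≤ v-u := min_le_right _ _
      have hmv1 : min εv (v-u) ≤ εv := min_le_left _ _
      have hmv2 : min εv (v-u) ≤ v-u := min_le_right _ _
      have huξ₁ : u < ξ₁ := by rw [hξ₁]; linarith
      have hξ₂v : ξ₂ < v := by rw [hξ₂]; linarith
      have hξ₁₂ : ξ₁ ≤ ξ₂ := by rw [hξ₁, hξ₂]; linarith
      have h1 : sturmSigma h t ξ₁ = sturmSigma h t u :=
        (hu ξ₁ (by linarith) (by rw [hξ₁, abs_of_pos (by linarith)]; linarith)).1 huξ₁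
      have h2 : sturmSigma h t ξ₂ = sturmSigma h t v
          + (if (h 0).eval v = 0 then 1 else 0) :=
        (hvl ξ₂ (by linarith) (by rw [hξ₂, abs_of_nonpos (by linarith)]; linarith)).2 hξ₂v
      rw [if_neg hv] at h2
      have h3 : sturmSigma h t ξ₁ = sturmSigma h t ξ₂ :=
        chain_const hc' hnoroot ξ₁ ξ₂ huξ₁ hξ₁₂ hξ₂v
      have hAempty : (h 0).roots.toFinset.filter (fun x => u < x ∧ x < v) = ∅ := by
        apply Finset.eq_empty_of_forall_notMem
        intro x hx
        obtain ⟨hx1, hx2, hx3⟩ := Finset.mem_filter.mp hx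
        have hroot : (h 0).eval x = 0 := (mem_roots h0ne).mp (Multiset.mem_toFinset.mp hx1)
        exact hnoroot x hx2 hx3 0 (by omega) hroot
      rw [hAempty, ← h1, h3, h2]
      simp

open Polynomial in
/-- Sturm's theorem: the number of distinct real roots of `p` in `(a, b)` equals
`σ(a) - σ(b)`, where `σ` counts sign changes of the Sturm sequence of `p`. -/
theorem stmt_13 (p : Polynomial ℝ) (a b : ℝ) (hab : a < b)
    (ha : Polynomial.eval a p ≠ 0) (hb : Polynomial.eval b p ≠ 0)
    (t : ℕ) (g : ℕ → Polynomial ℝ)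
    (h0 : g 0 = p) (h1 : g 1 = Polynomial.derivative p)
    (hrec : ∀ i, i + 2 ≤ t + 1 → g (i + 2) = -(g i % g (i + 1)))
    (hnz : ∀ i, i ≤ t → g i ≠ 0) (hlast : g (t + 1) = 0) :
    (((p.roots.toFinset.filter (fun x => a < x ∧ x < b)).card : ℤ)) =
      (sturmSigma g t a : ℤ) - sturmSigma g t b := by
  classical
  have hp : p ≠ 0 := fun h => ha (by simp [h])
  set gt := g t with hgtdef
  have hgt : gt ≠ 0 := hnz t le_rfl
  -- the remainder recurrence, additively
  have hgid : ∀ i, i + 2 ≤ t + 1 → g i = g (i+1) * (g i / g (i+1)) - g (i+2) := by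
    intro i hi
    have hd := EuclideanDomain.div_add_mod (g i) (g (i+1))
    rw [hrec i hi]
    rw [sub_neg_eq_add]
    exact hd.symm
  -- gt divides every g i
  have hdvdk : ∀ k, k ≤ t + 1 → gt ∣ g (t + 1 - k) := by
    intro k
    induction k using Nat.strong_induction_on with
    | _ k ih =>
      intro hk
      match k with
      | 0 => rw [Nat.sub_zero, hlast]; exact dvd_zero gt
      | 1 => have e : t + 1 - 1 = t := by omega
             rw [e, hgtdef]
      | (m+2) =>
        set i := t + 1 - (m+2) with hi
        have hi2 : i + 2 ≤ t + 1 := by omega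
        have d1 : gt ∣ g (i+1) := by
          have := ih (m+1) (by omega) (by omega)
          have e : t + 1 - (m+1) = i + 1 := by omega
          rwa [e] at this
        have d2 : gt ∣ g (i+2) := by
          have := ih m (by omega) (by omega)
          have e : t + 1 - m = i + 2 := by omega
          rwa [e] at this
        rw [hgid i hi2]
        exact dvd_sub (d1.mul_right _) d2
  have hdvd : ∀ i, i ≤ t + 1 → gt ∣ g i := by
    intro i hi
    have := hdvdk (t + 1 - i) (by omega)
    have e : t + 1 - (t + 1 - i) = i := by omega
    rwa [e] at this
  -- the reduced chain
  set w : ℕ → Polynomial ℝ := fun i => g i / gt with hwdef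
  have hmul : ∀ i, i ≤ t + 1 → gt * w i = g i := by
    intro i hi
    exact EuclideanDomain.mul_div_cancel' hgt (hdvd i hi)
  have hAw : w t = 1 := EuclideanDomain.div_self hgt
  have hBw : ∀ i, i ≤ t → w i ≠ 0 := by
    intro i hi hw0
    have := hmul i (by omega)
    rw [hw0, mul_zero] at this
    exact hnz i hi this.symm
  -- common divisors of consecutive terms divide gt
  have hstep : ∀ (D : Polynomial ℝ) i, i + 2 ≤ t + 1 → D ∣ g i → D ∣ g (i+1) → D ∣ g (i+2) := by
    intro D i hi d0 d1
    have : g (i+2) = g (i+1) * (g i / g (i+1)) - g i := by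
      have := hgid i hi
      linear_combination this
    rw [this]
    exact dvd_sub (d1.mul_right _) d0
  have hclimb : ∀ n, ∀ (D : Polynomial ℝ) i, i + n = t → D ∣ g i → D ∣ g (i+1) → D ∣ gt := by
    intro n
    induction n with
    | zero => intro D i hi d0 d1; rw [hgtdef, ← hi]; simpa using d0
    | succ n ihn =>
      intro D i hi d0 d1
      have d2 : D ∣ g (i+2) := hstep D i (by omega) d0 d1
      exact ihn D (i+1) (by omega) d1 d2
  -- consecutive w's have no common root
  have hnb : ∀ (c : ℝ) i, i ≤ t → (w i).eval c = 0 → (w (i+1)).eval c = 0 → False := by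
    intro c i hi e0 e1
    have dX0 : (X - C c) ∣ w i := dvd_iff_isRoot.mpr e0
    have dX1 : (X - C c) ∣ w (i+1) := dvd_iff_isRoot.mpr e1
    have D0 : (X - C c) * gt ∣ g i := by
      rw [← hmul i (by omega)]
      rw [mul_comm (X - C c) gt]
      exact mul_dvd_mul_left gt dX0
    have D1 : (X - C c) * gt ∣ g (i+1) := by
      rw [← hmul (i+1) (by omega)]
      rw [mul_comm (X - C c) gt]
      exact mul_dvd_mul_left gt dX1
    have Dt : (X - C c) * gt ∣ gt := hclimb (t - i) ((X - C c) * gt) i (by omega) D0 D1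
    have hdeg := Polynomial.natDegree_le_of_dvd Dt hgt
    rw [Polynomial.natDegree_mul (Polynomial.X_sub_C_ne_zero c) hgt,
      Polynomial.natDegree_X_sub_C] at hdeg
    omega
  -- reduced recurrence
  have hrecw : ∀ i, i + 2 ≤ t + 1 → w i = w (i+1) * (g i / g (i+1)) - w (i+2) := by
    intro i hi
    apply mul_left_cancel₀ hgt
    rw [hmul i (by omega), mul_sub, ← mul_assoc, hmul (i+1) (by omega), hmul (i+2) (by omega)]
    exact hgid i hi
  -- ChainHyp C
  have hCw : ∀ i c, 1 ≤ i → i ≤ t → (w i).eval c = 0 →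
      i < t ∧ (w (i-1)).eval c * (w (i+1)).eval c < 0 := by
    intro i c hi1 hit hic
    have hilt : i < t := by
      rcases eq_or_lt_of_le hit with rfl | hlt
      · exfalso; rw [hAw] at hic; simp at hic
      · exact hlt
    obtain ⟨j, rfl⟩ : ∃ j, i = j + 1 := ⟨i - 1, by omega⟩
    have hw : w j = w (j+1) * (g j / g (j+1)) - w (j+2) := hrecw j (by omega)
    have he : (w j).eval c = -((w (j+2)).eval c) := by
      rw [hw]
      simp [hic]
    have hne2 : (w (j+2)).eval c ≠ 0 := fun hz => hnb c (j+1) (by omega) hic hz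
    have e1 : j + 1 - 1 = j := by omega
    rw [e1, he]
    constructor
    · exact hilt
    · have : (w (j+1+1)).eval c = (w (j+2)).eval c := rfl
      rw [this]
      nlinarith [mul_self_pos.mpr hne2]
  -- ChainHyp D
  have hpeval : ∀ x : ℝ, p.eval x = gt.eval x * (w 0).eval x := by
    intro x
    rw [← Polynomial.eval_mul, hmul 0 (by omega), h0]
  have hp'eval : ∀ x : ℝ, (Polynomial.derivative p).eval x = gt.eval x * (w 1).eval x := by
    intro x
    rw [← Polynomial.eval_mul, hmul 1 (by omega), h1]
  have hDw : ∀ c : ℝ, (w 0).eval c = 0 → (w 1).eval c ≠ 0 ∧ ∃ ε > 0, ∀ x, |x - c| < ε → x ≠ c →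
      (c < x → (w 0).eval x * (w 1).eval x > 0) ∧ (x < c → (w 0).eval x * (w 1).eval x < 0) := by
    intro c hc0
    refine ⟨fun hz => hnb c 0 (by omega) hc0 hz, ?_⟩
    have hpc : p.eval c = 0 := by rw [hpeval c, hc0, mul_zero]
    obtain ⟨ε₁, hε₁, hs⟩ := pp'_local_sign p hp hpc
    obtain ⟨ε₂, hε₂, hwin⟩ := poly_window gt hgt c
    refine ⟨min ε₁ ε₂, lt_min hε₁ hε₂, ?_⟩
    intro x hx hxc
    have hx1 : |x - c| < ε₁ := lt_of_lt_of_le hx (min_le_left _ _)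
    have hx2 : |x - c| < ε₂ := lt_of_lt_of_le hx (min_le_right _ _)
    have hgx : gt.eval x ≠ 0 := hwin x hx2 hxc
    have hgx2 : (0:ℝ) < (gt.eval x)^2 := by positivity
    have hkey : (gt.eval x)^2 * ((w 0).eval x * (w 1).eval x)
        = p.eval x * (Polynomial.derivative p).eval x := by
      rw [hpeval x, hp'eval x]; ring
    obtain ⟨hR, hL⟩ := hs x hx1 hxc
    constructor
    · intro hcx
      have := hR hcx
      nlinarith
    · intro hxc'
      have := hL hxc'
      nlinarith
  have hcw : ChainHyp w t := ⟨hAw, hBw, hCw, hDw⟩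
  -- endpoints are not roots of gt or w 0
  have hgta : gt.eval a ≠ 0 := fun hz => ha (by rw [hpeval a, hz, zero_mul])
  have hgtb : gt.eval b ≠ 0 := fun hz => hb (by rw [hpeval b, hz, zero_mul])
  have hw0b : (w 0).eval b ≠ 0 := fun hz => hb (by rw [hpeval b, hz, mul_zero])
  -- root sets agree
  have hroots : p.roots.toFinset.filter (fun x => a < x ∧ x < b)
      = (w 0).roots.toFinset.filter (fun x => a < x ∧ x < b) := by
    have hw0ne : w 0 ≠ 0 := hBw 0 (by omega)
    ext x
    simp only [Finset.mem_filter, Multiset.mem_toFinset, mem_roots hp, mem_roots hw0ne,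
      IsRoot.def]
    constructor
    · rintro ⟨hx, hxab⟩
      refine ⟨?_, hxab⟩
      by_contra hw
      have hgtx : gt.eval x = 0 := by
        have := hpeval x
        rw [hx] at this
        rcases mul_eq_zero.mp this.symm with h | h
        · exact h
        · exact absurd h hw
      have hp' : Polynomial.derivative p ≠ 0 := by
        intro hz
        have hCp := Polynomial.eq_C_of_derivative_eq_zero hz
        rw [hCp] at hx hp
        simp at hx
        rw [hx] at hp
        simp at hp
      have hm : 1 ≤ p.rootMultiplicity x := (Polynomial.rootMultiplicity_pos hp).mpr hx
      have hd : (Polynomial.derivative p).rootMultiplicity x = p.rootMultiplicity x - 1 :=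
        Polynomial.derivative_rootMultiplicity_of_root hx
      have hgdvd' : gt ∣ Polynomial.derivative p := by rw [← h1]; exact hdvd 1 (by omega)
      have hgle : gt.rootMultiplicity x ≤ p.rootMultiplicity x - 1 := by
        rw [← hd]
        rw [Polynomial.le_rootMultiplicity_iff hp']
        exact dvd_trans (Polynomial.pow_rootMultiplicity_dvd gt x) hgdvd'
      have hpfact : p = gt * w 0 := by rw [hmul 0 (by omega), h0]
      have hmulm : p.rootMultiplicity x = gt.rootMultiplicity x + (w 0).rootMultiplicity x := by
        rw [hpfact]
        exact Polynomial.rootMultiplicity_mul (by rw [← hpfact]; exact hp)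
      have hw0m : (w 0).rootMultiplicity x = 0 :=
        Polynomial.rootMultiplicity_eq_zero hw
      omega
    · rintro ⟨hx, hxab⟩
      exact ⟨by rw [hpeval x, hx, mul_zero], hxab⟩
  -- σ transfer
  have hσ : ∀ ξ : ℝ, gt.eval ξ ≠ 0 → sturmSigma g t ξ = sturmSigma w t ξ := by
    intro ξ hξ
    unfold sturmSigma
    have hlist : (List.range (t + 1)).map (fun i => (g i).eval ξ)
        = ((List.range (t + 1)).map (fun i => (w i).eval ξ)).map (fun y => gt.eval ξ * y) := by
      rw [List.map_map]
      apply List.map_congr_left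
      intro i hi
      simp only [Function.comp]
      rw [← Polynomial.eval_mul, hmul i (by simp [List.mem_range] at hi; omega)]
    rw [hlist, signChanges_smul hξ]
  -- apply the global lemma
  have hglob := chain_global hcw
    (((∏ i ∈ Finset.range (t+1), w i).roots.toFinset.filter
      (fun x => a < x ∧ x < b)).card) a b hab hw0b le_rfl
  rw [hσ a hgta, hσ b hgtb, hroots, hglob]
  push_cast
  ring
end

section
/- Let χ be a 2-coloring of the k-element subsets of an N-element set with N = 2^{C(M, k-1)} + k - 2 and M = R_{k-1}(n-1), where R_{k-1} denotes the (k-1)-uniform 2-color Ramsey number. Then χ admits a monochromatic set of size n; consequently R_k(n) ≤ 2^{C(R_{k-1}(n-1), k-1)} + k - 2. -/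
/-- `S` is monochromatic for the coloring `χ` of `k`-element sets. -/
def IsMonoChrom (k : ℕ) (χ : Finset ℕ → Bool) (S : Finset ℕ) : Prop :=
  ∀ e ⊆ S, e.card = k → ∀ f ⊆ S, f.card = k → χ e = χ f

/-- Every 2-coloring of the `k`-subsets of an `N`-element set has a monochromatic
set of size `n`. -/
def RamseyProp (k n N : ℕ) : Prop :=
  ∀ χ : Finset ℕ → Bool, ∃ S ⊆ Finset.range N, S.card = n ∧ IsMonoChrom k χ S

/-- The `k`-uniform 2-color Ramsey number `R_k(n)`. -/
noncomputable def ramsey (k n : ℕ) : ℕ := sInf {N | RamseyProp k n N}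

open Finset

/-- The invariant for the Erdős–Rado greedy construction: all chosen points `A` lie
below all candidates `X`, and for every `(k-1)`-subset `T` of `A`, the color of
`T ∪ {z}` is the same for all `z` that are either candidates or chosen points above `T`. -/
def ERInv (k : ℕ) (χ : Finset ℕ → Bool) (A X : Finset ℕ) : Prop :=
  (∀ a ∈ A, ∀ x ∈ X, a < x) ∧
  ∀ T ⊆ A, T.card = k - 1 → ∀ z, (z ∈ X ∨ (z ∈ A ∧ ∀ t ∈ T, t < z)) →
    ∀ w, (w ∈ X ∨ (w ∈ A ∧ ∀ t ∈ T, t < w)) → χ (insert z T) = χ (insert w T)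

lemma greedy (k : ℕ) (χ : Finset ℕ → Bool) (A X : Finset ℕ) (m : ℕ)
    (hInv : ERInv k χ A X) (hk : 2 ≤ k)
    (hsz : 2 ^ (A.card.choose (k - 2)) * m + 2 ≤ X.card) :
    ∃ a ∈ X, ∃ X' ⊆ X.erase a, ERInv k χ (insert a A) X' ∧ m < X'.card := by
  have hne : X.Nonempty := card_pos.mp (by omega)
  set a := X.min' hne with ha
  have haX : a ∈ X := X.min'_mem hne
  set s := X.erase a with hs
  have hscard : s.card = X.card - 1 := card_erase_of_mem haX
  set F : ℕ → Finset (Finset ℕ) :=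
    fun x => (A.powersetCard (k - 2)).filter (fun T => χ (insert x (insert a T)) = true) with hF
  have hmaps : ∀ x ∈ s, F x ∈ (A.powersetCard (k - 2)).powerset := by
    intro x _; exact mem_powerset.mpr (filter_subset _ _)
  have htcard : ((A.powersetCard (k - 2)).powerset).card = 2 ^ (A.card.choose (k - 2)) := by
    rw [card_powerset, card_powersetCard]
  obtain ⟨Y, _, hYcard⟩ := exists_lt_card_fiber_of_mul_lt_card_of_maps_to (n := m) hmaps
    (by rw [htcard]; omega)
  refine ⟨a, haX, s.filter (fun x => F x = Y), filter_subset _ _, ⟨?_, ?_⟩, hYcard⟩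
  · intro b hb x hx
    have hx' : x ∈ s := mem_of_mem_filter x hx
    have hxX : x ∈ X := mem_of_mem_erase hx'
    have hxa : x ≠ a := ne_of_mem_erase hx'
    rcases mem_insert.mp hb with rfl | hbA
    · exact lt_of_le_of_ne (X.min'_le x hxX) (Ne.symm hxa)
    · exact hInv.1 b hbA x hxX
  · intro T hT hTcard z hz w hw
    by_cases haT : a ∈ T
    · have key : ∀ u, (u ∈ s.filter (fun x => F x = Y) ∨
          (u ∈ insert a A ∧ ∀ t ∈ T, t < u)) → u ∈ s.filter (fun x => F x = Y) := by
        intro u hu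
        rcases hu with h | ⟨hu, habove⟩
        · exact h
        · exfalso
          have hau := habove a haT
          rcases mem_insert.mp hu with rfl | huA
          · omega
          · have := hInv.1 u huA a haX; omega
      have hzX := key z hz
      have hwX := key w hw
      set T₀ := T.erase a with hT₀
      have hTeq : insert a T₀ = T := insert_erase haT
      have hT₀mem : T₀ ∈ A.powersetCard (k - 2) := by
        rw [mem_powersetCard]
        constructor
        · intro t ht
          have htT : t ∈ T := mem_of_mem_erase ht
          rcases mem_insert.mp (hT htT) with h | h
          · exact absurd h (ne_of_mem_erase ht)
          · exact h
        · rw [card_erase_of_mem haT, hTcard]; omega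
      have hFz : F z = Y := (mem_filter.mp hzX).2
      have hFw : F w = Y := (mem_filter.mp hwX).2
      have hiff : (T₀ ∈ F z) = (T₀ ∈ F w) := by rw [hFz, hFw]
      rw [hF] at hiff
      simp only [mem_filter, hT₀mem, true_and] at hiff
      rw [← hTeq]
      rw [eq_iff_iff] at hiff
      cases h1 : χ (insert z (insert a T₀)) <;> cases h2 : χ (insert w (insert a T₀)) <;>
        simp [h1, h2] at hiff ⊢
    · have hTA : T ⊆ A := by
        intro t ht
        rcases mem_insert.mp (hT ht) with rfl | h
        · exact absurd ht haT
        · exact h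
      have htrans : ∀ u, (u ∈ s.filter (fun x => F x = Y) ∨
          (u ∈ insert a A ∧ ∀ t ∈ T, t < u)) → (u ∈ X ∨ (u ∈ A ∧ ∀ t ∈ T, t < u)) := by
        intro u hu
        rcases hu with h | ⟨hu, habove⟩
        · exact Or.inl (mem_of_mem_erase (mem_of_mem_filter u h))
        · rcases mem_insert.mp hu with rfl | huA
          · exact Or.inl haX
          · exact Or.inr ⟨huA, habove⟩
      exact hInv.2 T hTA hTcard z (htrans z hz) w (htrans w hw)

/-- Size bookkeeping function for the greedy construction. -/
def nfun (k M i : ℕ) : ℕ := 2 ^ (M.choose (k - 1) - i.choose (k - 1)) + (k - 2 - i)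

lemma nfun_pos (k M i : ℕ) : 1 ≤ nfun k M i :=
  le_trans (Nat.one_le_pow _ _ (by norm_num)) (Nat.le_add_right _ _)

lemma er_arith (k M i : ℕ) (hk : 2 ≤ k) (hiM : i + 1 ≤ M) :
    2 ^ (i.choose (k - 2)) * (nfun k M (i + 1) - 1) + 2 ≤ nfun k M i := by
  have pascal : (i + 1).choose (k - 1) = i.choose (k - 2) + i.choose (k - 1) := by
    have h1 : k - 1 = (k - 2) + 1 := by omega
    rw [h1]; exact Nat.choose_succ_succ i (k - 2)
  have hmono : (i + 1).choose (k - 1) ≤ M.choose (k - 1) := Nat.choose_le_choose _ hiM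
  by_cases hik : k - 2 ≤ i
  · have hc : 0 < i.choose (k - 2) := Nat.choose_pos hik
    have h2 : 2 ≤ 2 ^ (i.choose (k - 2)) := by
      calc (2:ℕ) = 2 ^ 1 := rfl
      _ ≤ _ := Nat.pow_le_pow_right (by norm_num) hc
    have hkey : 2 ^ (i.choose (k - 2)) * 2 ^ (M.choose (k - 1) - (i + 1).choose (k - 1)) =
        2 ^ (M.choose (k - 1) - i.choose (k - 1)) := by
      rw [← pow_add]; congr 1; omega
    have hp1 : 1 ≤ 2 ^ (M.choose (k - 1) - (i + 1).choose (k - 1)) :=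
      Nat.one_le_pow _ _ (by norm_num)
    unfold nfun
    have h3 : k - 2 - i = 0 := by omega
    have h4 : k - 2 - (i + 1) = 0 := by omega
    rw [h3, h4]
    obtain ⟨y, hy⟩ : ∃ y, 2 ^ (M.choose (k - 1) - (i + 1).choose (k - 1)) = y + 1 :=
      ⟨_, (Nat.succ_pred_eq_of_pos hp1).symm⟩
    rw [hy] at hkey
    rw [hy]
    simp only [Nat.add_sub_cancel, Nat.add_zero]
    rw [← hkey]
    have hexp : 2 ^ (i.choose (k - 2)) * (y + 1) =
        2 ^ (i.choose (k - 2)) * y + 2 ^ (i.choose (k - 2)) := by ring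
    omega
  · have h0 : i.choose (k - 2) = 0 := Nat.choose_eq_zero_of_lt (by omega)
    have h1 : i.choose (k - 1) = 0 := Nat.choose_eq_zero_of_lt (by omega)
    have h2 : (i + 1).choose (k - 1) = 0 := Nat.choose_eq_zero_of_lt (by omega)
    have hp : 1 ≤ 2 ^ (M.choose (k - 1)) := Nat.one_le_pow _ _ (by norm_num)
    unfold nfun
    rw [h0, h1, h2, pow_zero, one_mul]
    simp only [Nat.sub_zero]
    omega

lemma build (k M N : ℕ) (χ : Finset ℕ → Bool) (hk : 2 ≤ k) :
    ∀ (m : ℕ) (A X : Finset ℕ), ERInv k χ A X → A.card + m = M →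
      nfun k M A.card ≤ X.card → A ⊆ Finset.range N → X ⊆ Finset.range N →
      ∃ A' X', A'.card = M ∧ ERInv k χ A' X' ∧ X'.Nonempty ∧
        A' ⊆ Finset.range N ∧ X' ⊆ Finset.range N := by
  intro m
  induction m with
  | zero =>
    intro A X hInv hcard hsz hA hX
    have h1 := nfun_pos k M A.card
    exact ⟨A, X, by omega, hInv, card_pos.mp (by omega), hA, hX⟩
  | succ m ih =>
    intro A X hInv hcard hsz hA hX
    have hiM : A.card + 1 ≤ M := by omega
    obtain ⟨a, haX, X', hX'sub, hInv', hX'card⟩ :=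
      greedy k χ A X (nfun k M (A.card + 1) - 1) hInv hk
        (le_trans (er_arith k M A.card hk hiM) hsz)
    have haA : a ∉ A := fun h => lt_irrefl a (hInv.1 a h a haX)
    have hcard' : (insert a A).card = A.card + 1 := card_insert_of_notMem haA
    apply ih (insert a A) X' hInv' (by omega)
    · rw [hcard']
      have h1 := nfun_pos k M (A.card + 1)
      omega
    · exact insert_subset (hX haX) hA
    · exact fun x hx => hX (mem_of_mem_erase (hX'sub hx))

lemma er_step (k n M : ℕ) (hk : 2 ≤ k) (hn : 1 ≤ n)
    (hR : RamseyProp (k - 1) (n - 1) M) :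
    RamseyProp k n (2 ^ (M.choose (k - 1)) + k - 2) := by
  intro χ
  have hNval : 2 ^ (M.choose (k - 1)) + k - 2 = 2 ^ (M.choose (k - 1)) + (k - 2) := by
    have := Nat.one_le_pow (M.choose (k - 1)) 2 (by norm_num)
    omega
  set N := 2 ^ (M.choose (k - 1)) + k - 2 with hNdef
  have hInv0 : ERInv k χ ∅ (Finset.range N) := by
    constructor
    · intro a ha; exact absurd ha (notMem_empty a)
    · intro T hT hTcard z hz w hw
      exfalso
      have hTe : T = ∅ := subset_empty.mp hT
      rw [hTe, card_empty] at hTcard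
      omega
  have hsz0 : nfun k M (0 : ℕ) ≤ (Finset.range N).card := by
    rw [card_range]
    unfold nfun
    rw [Nat.choose_eq_zero_of_lt (show 0 < k - 1 by omega), Nat.sub_zero, Nat.sub_zero]
    omega
  obtain ⟨A, X, hAcard, hInvA, hXne, hAsub, hXsub⟩ :=
    build k M N χ hk M ∅ (Finset.range N) hInv0 (by simp) (by simpa using hsz0)
      (empty_subset _) subset_rfl
  obtain ⟨x, hxX⟩ := hXne
  have hAx : ∀ b ∈ A, b < x := fun b hb => hInvA.1 b hb x hxX
  have hxA : x ∉ A := fun h => lt_irrefl x (hAx x h)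
  set f : ℕ → ℕ := fun i => if h : i < M then A.orderEmbOfFin hAcard ⟨i, h⟩ else 0 with hf
  have hfA : ∀ i < M, f i ∈ A := by
    intro i hi
    rw [hf]; simp only [dif_pos hi]
    exact A.orderEmbOfFin_mem hAcard ⟨i, hi⟩
  have hfinj : ∀ i < M, ∀ j < M, f i = f j → i = j := by
    intro i hi j hj hij
    rw [hf] at hij
    simp only [dif_pos hi, dif_pos hj] at hij
    have := (A.orderEmbOfFin hAcard).injective hij
    exact congrArg Fin.val this
  set χ' : Finset ℕ → Bool := fun S => χ (insert x (S.image f)) with hχ'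
  obtain ⟨S, hSsub, hScard, hSmono⟩ := hR χ'
  have hSrange : ∀ i ∈ S, i < M := fun i hi => mem_range.mp (hSsub hi)
  set B := S.image f with hB
  have hBA : B ⊆ A := by
    intro b hb
    obtain ⟨i, hi, rfl⟩ := mem_image.mp hb
    exact hfA i (hSrange i hi)
  have hinjS : Set.InjOn f ↑S := fun i hi j hj h =>
    hfinj i (hSrange i (by exact_mod_cast hi)) j (hSrange j (by exact_mod_cast hj)) h
  have hBcard : B.card = n - 1 := by rw [hB, card_image_of_injOn hinjS, hScard]
  have hxB : x ∉ B := fun h => lt_irrefl x (hAx x (hBA h))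
  have hchrom : ∀ T ⊆ A, T.card = k - 1 → ∀ b, b ∈ insert x A → (∀ t ∈ T, t < b) →
      χ (insert b T) = χ (insert x T) := by
    intro T hT hTcard b hb habove
    refine hInvA.2 T hT hTcard b ?_ x (Or.inl hxX)
    rcases mem_insert.mp hb with rfl | hbA
    · exact Or.inl hxX
    · exact Or.inr ⟨hbA, habove⟩
  have claim : ∀ e ⊆ insert x B, e.card = k → ∃ S' ⊆ S, S'.card = k - 1 ∧ χ e = χ' S' := by
    intro e he hecard
    have hene : e.Nonempty := card_pos.mp (by omega)
    set bm := e.max' hene with hbm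
    have hbme : bm ∈ e := e.max'_mem hene
    set T := e.erase bm with hT
    have hTcard : T.card = k - 1 := by rw [hT, card_erase_of_mem hbme, hecard]
    have heT : insert bm T = e := insert_erase hbme
    have hTB : T ⊆ B := by
      intro t ht
      have htbm : t ≠ bm := ne_of_mem_erase ht
      have hte : t ∈ e := mem_of_mem_erase ht
      rcases mem_insert.mp (he hte) with h | h
      · exfalso
        have hle : t ≤ bm := e.le_max' t hte
        rcases mem_insert.mp (he hbme) with h' | h'
        · exact htbm (h.trans h'.symm)
        · have := hAx bm (hBA h')
          omega
      · exact h
    have hTA : T ⊆ A := hTB.trans hBA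
    have hbmx : bm ∈ insert x A := by
      rcases mem_insert.mp (he hbme) with h | h
      · rw [h]; exact mem_insert_self x A
      · exact mem_insert_of_mem (hBA h)
    have habove : ∀ t ∈ T, t < bm := fun t ht =>
      lt_of_le_of_ne (e.le_max' t (mem_of_mem_erase ht)) (ne_of_mem_erase ht)
    have h1 : χ e = χ (insert x T) := by
      rw [← heT]
      exact hchrom T hTA hTcard bm hbmx habove
    set S' := S.filter (fun i => f i ∈ T) with hS'
    have hS'sub : S' ⊆ S := filter_subset _ _
    have hTimg : S'.image f = T := by
      apply Subset.antisymm
      · intro t ht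
        obtain ⟨i, hi, rfl⟩ := mem_image.mp ht
        exact (mem_filter.mp hi).2
      · intro t ht
        obtain ⟨i, hi, rfl⟩ := mem_image.mp (hTB ht)
        exact mem_image.mpr ⟨i, mem_filter.mpr ⟨hi, ht⟩, rfl⟩
    have hS'card : S'.card = k - 1 := by
      rw [← hTcard, ← hTimg, card_image_of_injOn (hinjS.mono (coe_subset.mpr hS'sub))]
    refine ⟨S', hS'sub, hS'card, ?_⟩
    rw [h1, hχ']
    simp only
    rw [hTimg]
  refine ⟨insert x B, ?_, ?_, ?_⟩
  · exact insert_subset (hXsub hxX) (hBA.trans hAsub)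
  · rw [card_insert_of_notMem hxB, hBcard]; omega
  · intro e he hecard g hg hgcard
    obtain ⟨Se, hSe, hSecard, h1⟩ := claim e he hecard
    obtain ⟨Sg, hSg, hSgcard, h2⟩ := claim g hg hgcard
    rw [h1, h2]
    exact hSmono Se hSe hSecard Sg hSg hSgcard

lemma ramseyProp_zero' (k N : ℕ) (hk : 1 ≤ k) : RamseyProp k 0 N := by
  intro χ
  refine ⟨∅, empty_subset _, card_empty, ?_⟩
  intro e he hecard g hg hgcard
  rw [subset_empty.mp he, card_empty] at hecard
  omega

lemma ramseyProp_k0 (n : ℕ) : RamseyProp 0 n n := by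
  intro χ
  refine ⟨Finset.range n, subset_rfl, card_range n, ?_⟩
  intro e he hecard g hg hgcard
  rw [card_eq_zero.mp hecard, card_eq_zero.mp hgcard]

lemma ramseyProp_k1 (n : ℕ) : RamseyProp 1 n (2 * n) := by
  intro χ
  have key : ∀ c : Bool, n ≤ ((Finset.range (2 * n)).filter (fun x => χ {x} = c)).card →
      ∃ S ⊆ Finset.range (2 * n), S.card = n ∧ IsMonoChrom 1 χ S := by
    intro c hc
    obtain ⟨S, hSsub, hScard⟩ := Finset.exists_subset_card_eq hc
    refine ⟨S, hSsub.trans (filter_subset _ _), hScard, ?_⟩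
    intro e he hecard g hg hgcard
    obtain ⟨a, rfl⟩ := card_eq_one.mp hecard
    obtain ⟨b, rfl⟩ := card_eq_one.mp hgcard
    have ha := (mem_filter.mp (hSsub (he (mem_singleton_self a)))).2
    have hb := (mem_filter.mp (hSsub (hg (mem_singleton_self b)))).2
    rw [ha, hb]
  have hcover : Finset.range (2 * n) ⊆
      ((Finset.range (2 * n)).filter (fun x => χ {x} = true)) ∪
      ((Finset.range (2 * n)).filter (fun x => χ {x} = false)) := by
    intro y hy
    rcases Bool.eq_false_or_eq_true (χ {y}) with h | h
    · exact mem_union_left _ (mem_filter.mpr ⟨hy, h⟩)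
    · exact mem_union_right _ (mem_filter.mpr ⟨hy, h⟩)

  have hsum := (card_le_card hcover).trans (card_union_le _ _)
  rw [card_range] at hsum
  rcases (by omega :
      n ≤ ((Finset.range (2 * n)).filter (fun x => χ {x} = true)).card ∨
      n ≤ ((Finset.range (2 * n)).filter (fun x => χ {x} = false)).card) with h | h
  · exact key true h
  · exact key false h

lemma ramseyProp_exists (k n : ℕ) : ∃ N, RamseyProp k n N := by
  induction k generalizing n with
  | zero => exact ⟨n, ramseyProp_k0 n⟩
  | succ k ih =>
    match k, ih with
    | 0, _ => exact ⟨2 * n, ramseyProp_k1 n⟩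
    | k + 1, ih =>
      rcases Nat.eq_zero_or_pos n with rfl | hn
      · exact ⟨0, ramseyProp_zero' _ 0 (by omega)⟩
      · obtain ⟨M, hM⟩ := ih (n - 1)
        refine ⟨2 ^ (M.choose (k + 2 - 1)) + (k + 2) - 2, ?_⟩
        exact er_step (k + 2) n M (by omega) hn hM


/-- Erdős–Rado: with `M = R_{k-1}(n-1)` and `N = 2^C(M, k-1) + k - 2`, every 2-coloring
of the `k`-subsets of an `N`-element set has a monochromatic set of size `n`; consequently
`R_k(n) ≤ 2^C(R_{k-1}(n-1), k-1) + k - 2`. -/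
theorem stmt_14 (k n : ℕ) (hk : 3 ≤ k)
    (M N : ℕ) (hM : M = ramsey (k - 1) (n - 1))
    (hN : N = 2 ^ (Nat.choose M (k - 1)) + k - 2) :
    RamseyProp k n N ∧ ramsey k n ≤ N := by
  have hmain : RamseyProp k n N := by
    rcases Nat.eq_zero_or_pos n with rfl | hn
    · exact ramseyProp_zero' k N (by omega)
    · have hRM : RamseyProp (k - 1) (n - 1) M := by
        rw [hM]
        exact Nat.sInf_mem (ramseyProp_exists (k - 1) (n - 1))
      rw [hN]
      exact er_step k n M (by omega) hn hRM
  exact ⟨hmain, Nat.sInf_le hmain⟩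
end

section
/- Let b₀ be a sufficiently large integer base and let a, b ∈ {1, ..., b₀^N} with a < b be such that a - 1 and b - 1, written in base b₀, have all digits in {0,1}, and define δ(a,b) = log_{b₀}(b - a). If i is the largest index at which the base-b₀ digit sequences of a - 1 and b - 1 differ, then i - 1/10 < δ(a,b) < i + 1/10. -/
set_option maxHeartbeats 1000000

private lemma geom_bound (b₀ : ℕ) (h : 3 ≤ b₀) (i : ℕ) :
    2 * ∑ j ∈ Finset.range i, b₀ ^ j < b₀ ^ i := by
  induction i with
  | zero => simp
  | succ i ih =>
    rw [Finset.sum_range_succ, pow_succ]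
    nlinarith [pow_pos (by omega : 0 < b₀) i]

/-- For a sufficiently large base `b₀`, if `a - 1` and `b - 1` have `{0,1}`-digit
expansions in base `b₀` and `i` is the largest index at which the digits differ
(with `a < b`), then `i - 1/10 < log_{b₀}(b - a) < i + 1/10`. -/
theorem stmt_15 :
    ∃ B : ℕ, ∀ b₀ : ℕ, B ≤ b₀ → ∀ (a b n i : ℕ) (f g : ℕ → ℕ),
      1 ≤ a → a < b →
      (∀ j, f j ≤ 1) → (∀ j, g j ≤ 1) →
      (∀ j, n ≤ j → f j = 0) → (∀ j, n ≤ j → g j = 0) →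
      a - 1 = ∑ j ∈ Finset.range n, f j * b₀ ^ j →
      b - 1 = ∑ j ∈ Finset.range n, g j * b₀ ^ j →
      f i ≠ g i → (∀ j, i < j → f j = g j) →
      (i : ℝ) - 1 / 10 < Real.logb b₀ ((b : ℝ) - a) ∧
        Real.logb b₀ ((b : ℝ) - a) < (i : ℝ) + 1 / 10 := by
  refine ⟨1024, ?_⟩
  intro b₀ hB a b n i f g ha hab hf hg hfn hgn hsa hsb hne htail
  have hi : i < n := by
    by_contra h
    push_neg at h
    exact hne (by rw [hfn i h, hgn i h])
  -- integer identity
  have hZa : (a : ℤ) - 1 = ∑ j ∈ Finset.range n, (f j : ℤ) * (b₀ : ℤ) ^ j := by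
    have := congrArg (fun x : ℕ => (x : ℤ)) hsa
    push_cast at this
    rw [Nat.cast_sub ha] at this
    push_cast at this
    linarith
  have hZb : (b : ℤ) - 1 = ∑ j ∈ Finset.range n, (g j : ℤ) * (b₀ : ℤ) ^ j := by
    have := congrArg (fun x : ℕ => (x : ℤ)) hsb
    push_cast at this
    rw [Nat.cast_sub (by omega : 1 ≤ b)] at this
    push_cast at this
    linarith
  have hdiff : (b : ℤ) - a = ∑ j ∈ Finset.range n, ((g j : ℤ) - f j) * (b₀ : ℤ) ^ j := by
    rw [Finset.sum_congr rfl (fun j _ => sub_mul ((g j : ℤ)) (f j) _), Finset.sum_sub_distrib]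
    linarith
  -- tail vanishes
  have hdiff2 : (b : ℤ) - a = ∑ j ∈ Finset.range (i + 1), ((g j : ℤ) - f j) * (b₀ : ℤ) ^ j := by
    rw [hdiff]
    refine (Finset.sum_subset ?_ ?_).symm
    · intro j hj; simp at hj ⊢; omega
    · intro j _ hj
      simp only [Finset.mem_range, not_lt] at hj
      rw [htail j (by omega)]
      ring
  set S : ℤ := ∑ j ∈ Finset.range i, ((g j : ℤ) - f j) * (b₀ : ℤ) ^ j with hS
  have hsplit : (b : ℤ) - a = S + ((g i : ℤ) - f i) * (b₀ : ℤ) ^ i := by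
    rw [hdiff2, Finset.sum_range_succ]
  -- bound on S
  have hSbound : |S| ≤ ∑ j ∈ Finset.range i, (b₀ : ℤ) ^ j := by
    refine (Finset.abs_sum_le_sum_abs _ _).trans (Finset.sum_le_sum fun j _ => ?_)
    rw [abs_mul]
    have h1 : |(g j : ℤ) - f j| ≤ 1 := by
      have := hf j; have := hg j
      rw [abs_le]; constructor <;> [skip; skip] <;> push_cast <;> omega
    have h2 : |(b₀ : ℤ) ^ j| = (b₀ : ℤ) ^ j := abs_of_nonneg (by positivity)
    nlinarith [abs_nonneg ((b₀:ℤ)^j), pow_nonneg (by positivity : (0:ℤ) ≤ b₀) j]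
  have hgeom : 2 * ∑ j ∈ Finset.range i, (b₀ : ℤ) ^ j < (b₀ : ℤ) ^ i := by
    exact_mod_cast geom_bound b₀ (by omega) i
  have hSabs : 2 * |S| < (b₀ : ℤ) ^ i := lt_of_le_of_lt (by linarith) hgeom
  -- the top digit: g i = 1, f i = 0
  have hd : (g i : ℤ) - f i = 1 := by
    have h1 : f i ≤ 1 := hf i
    have h2 : g i ≤ 1 := hg i
    have hcases : (g i : ℤ) - f i = 1 ∨ (g i : ℤ) - f i = -1 := by
      have : f i ≠ g i := hne
      interval_cases (f i) <;> interval_cases (g i) <;> simp_all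
    rcases hcases with h | h
    · exact h
    · exfalso
      rw [h] at hsplit
      have hpos : (a : ℤ) < b := by exact_mod_cast hab
      have h1 := abs_nonneg S
      have h2 := le_abs_self S
      linarith
  rw [hd, one_mul] at hsplit
  -- key bounds in ℤ : b₀^i < 2*(b-a) < 4*b₀^i
  have hlow : (b₀ : ℤ) ^ i < 2 * ((b : ℤ) - a) := by
    have := neg_abs_le S; nlinarith [abs_nonneg S]
  have hhigh : (b : ℤ) - a < 2 * (b₀ : ℤ) ^ i := by
    have := le_abs_self S; nlinarith [abs_nonneg S]
  -- move to ℝ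
  have hb1 : (1 : ℝ) < (b₀ : ℝ) := by exact_mod_cast (by omega : 1 < b₀)
  have hxpos : (0 : ℝ) < (b : ℝ) - a := by
    have : (a:ℝ) < b := by exact_mod_cast hab
    linarith
  have hRlow : ((b₀ : ℝ) ^ i) / 2 < (b : ℝ) - a := by
    have : ((b₀:ℤ):ℝ) ^ i < 2 * (((b:ℤ):ℝ) - ((a:ℤ):ℝ)) := by exact_mod_cast hlow
    push_cast at this ⊢; linarith
  have hRhigh : (b : ℝ) - a < 2 * (b₀ : ℝ) ^ i := by
    have : ((b:ℤ):ℝ) - ((a:ℤ):ℝ) < 2 * ((b₀:ℤ):ℝ) ^ i := by exact_mod_cast hhigh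
    push_cast at this ⊢; linarith
  -- logb 2 ≤ 1/10
  have hlogb₀pos : 0 < Real.log b₀ := Real.log_pos hb1
  have hlog2 : Real.logb b₀ 2 ≤ 1 / 10 := by
    rw [Real.logb, div_le_iff₀ hlogb₀pos]
    have h1024 : (1024 : ℝ) ≤ (b₀ : ℝ) := by exact_mod_cast hB
    have := Real.log_le_log (by norm_num : (0:ℝ) < 1024) h1024
    have heq : Real.log 1024 = 10 * Real.log 2 := by
      rw [show (1024:ℝ) = 2 ^ 10 by norm_num, Real.log_pow]; push_cast; ring
    rw [heq] at this
    linarith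
  have hlogbpow : Real.logb b₀ ((b₀ : ℝ) ^ i) = i := by
    rw [Real.logb_pow, Real.logb_self_eq_one hb1, mul_one]
  constructor
  · have h1 : Real.logb b₀ (((b₀ : ℝ) ^ i) / 2) < Real.logb b₀ ((b : ℝ) - a) :=
      Real.logb_lt_logb hb1 (by positivity) hRlow
    have h2 : Real.logb b₀ (((b₀ : ℝ) ^ i) / 2) = i - Real.logb b₀ 2 := by
      rw [Real.logb_div (by positivity) (by norm_num), hlogbpow]
    linarith
  · have h1 : Real.logb b₀ ((b : ℝ) - a) < Real.logb b₀ (2 * (b₀ : ℝ) ^ i) :=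
      Real.logb_lt_logb hb1 hxpos hRhigh
    have h2 : Real.logb b₀ (2 * (b₀ : ℝ) ^ i) = Real.logb b₀ 2 + i := by
      rw [Real.logb_mul (by norm_num) (by positivity), hlogbpow]
    linarith
end
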